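/- arXiv:2102.01481 — 7 statements merged into one kernel-verified Lean document; each statement's English description precedes it below -/
import Mathlib

section
/- Let F : ℝ^d → S^ℓ be a matrix-valued function each of whose components F_ij is twice continuously differentiable, and suppose there exists M > 0 such that ‖∇²F_ij(x)‖_F ≤ M for all x ∈ ℝ^d and all i, j ∈ {1,…,ℓ}. Then F is DC, and for any μ ≥ ℓM the pair (G, H) with G(x) = F(x) + (μ/2)|x|² I_ℓ and H(x) = (μ/2)|x|² I_ℓ is a DC decomposition of F, i.e. both G and H are matrix convex and F = G − H. -/
open Matrix

/-- The Frobenius norm of a square real matrix. -/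
noncomputable def frobNorm {n : ℕ} (A : Matrix (Fin n) (Fin n) ℝ) : ℝ :=
  Real.sqrt (∑ i, ∑ j, (A i j) ^ 2)

/-- The Hessian matrix of a real-valued function on `ℝ^d`. -/
noncomputable def hessMatrix {d : ℕ} (f : EuclideanSpace ℝ (Fin d) → ℝ)
    (x : EuclideanSpace ℝ (Fin d)) : Matrix (Fin d) (Fin d) ℝ :=
  Matrix.of fun i j =>
    fderiv ℝ (fun y => fderiv ℝ f y (EuclideanSpace.single j 1)) x (EuclideanSpace.single i 1)

/-- A matrix-valued function is matrix convex if
`α • F x₁ + (1 - α) • F x₂ - F (α • x₁ + (1 - α) • x₂)` is positive semidefinite. -/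
def MatrixConvex {d l : ℕ} (G : EuclideanSpace ℝ (Fin d) → Matrix (Fin l) (Fin l) ℝ) : Prop :=
  ∀ (x₁ x₂ : EuclideanSpace ℝ (Fin d)) (α : ℝ), α ∈ Set.Icc (0 : ℝ) 1 →
    (α • G x₁ + (1 - α) • G x₂ - G (α • x₁ + (1 - α) • x₂)).PosSemidef

variable {d : ℕ}
local notation "E" => EuclideanSpace ℝ (Fin d)

lemma hasFDerivAt_inner' {f : E → ℝ} (hf : ContDiff ℝ 2 f) (w : E) (x : E) :
    HasFDerivAt (fun y => fderiv ℝ f y w)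
      ((ContinuousLinearMap.apply ℝ ℝ w).comp (fderiv ℝ (fderiv ℝ f) x)) x := by
  have h1 : HasFDerivAt (fderiv ℝ f) (fderiv ℝ (fderiv ℝ f) x) x :=
    (((hf.fderiv_right (by norm_num : (1:WithTop ℕ∞)+1 ≤ 2)).differentiable one_ne_zero) x).hasFDerivAt
  exact (ContinuousLinearMap.apply ℝ ℝ w).hasFDerivAt.comp x h1

lemma fderiv_fderiv_apply {f : E → ℝ} (hf : ContDiff ℝ 2 f) (x w z : E) :
    fderiv ℝ (fun y => fderiv ℝ f y w) x z = fderiv ℝ (fderiv ℝ f) x z w := by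
  rw [(hasFDerivAt_inner' hf w x).fderiv]; rfl

lemma hess_eq {f : E → ℝ} (hf : ContDiff ℝ 2 f) (x : E) (a b : Fin d) :
    hessMatrix f x a b =
      fderiv ℝ (fderiv ℝ f) x (EuclideanSpace.single a 1) (EuclideanSpace.single b 1) := by
  simpa [hessMatrix] using
    fderiv_fderiv_apply hf x (EuclideanSpace.single b 1) (EuclideanSpace.single a 1)

lemma euclid_decomp (u : E) : ∑ a, u a • EuclideanSpace.single a (1:ℝ) = u := by
  have := (EuclideanSpace.basisFun (Fin d) ℝ).sum_repr u
  simpa [EuclideanSpace.basisFun_apply, EuclideanSpace.basisFun_repr] using this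

lemma D2_expand {f : E → ℝ} (hf : ContDiff ℝ 2 f) (x u : E) :
    fderiv ℝ (fderiv ℝ f) x u u = ∑ a, ∑ b, u a * u b * hessMatrix f x a b := by
  set D2 := fderiv ℝ (fderiv ℝ f) x with hD2
  have h1 : D2 u = ∑ a, u a • D2 (EuclideanSpace.single a 1) := by
    conv_lhs => rw [← euclid_decomp u]
    simp [map_sum]
  rw [h1, ContinuousLinearMap.sum_apply]
  refine Finset.sum_congr rfl fun a _ => ?_
  rw [ContinuousLinearMap.smul_apply]
  have h2 : D2 (EuclideanSpace.single a 1) u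
      = ∑ b, u b • D2 (EuclideanSpace.single a 1) (EuclideanSpace.single b 1) := by
    conv_lhs => rw [← euclid_decomp u]
    simp [map_sum]
  rw [h2, Finset.smul_sum]
  refine Finset.sum_congr rfl fun b _ => ?_
  rw [hess_eq hf x a b]
  simp [smul_eq_mul]; ring

lemma abs_CS {ι : Type*} [Fintype ι] (f g : ι → ℝ) :
    |∑ i, f i * g i| ≤ Real.sqrt (∑ i, f i ^ 2) * Real.sqrt (∑ i, g i ^ 2) := by
  have h := Finset.sum_mul_sq_le_sq_mul_sq Finset.univ f g
  have h2 : |∑ i, f i * g i| = Real.sqrt ((∑ i, f i * g i) ^ 2) := (Real.sqrt_sq_eq_abs _).symm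
  rw [h2, ← Real.sqrt_mul (Finset.sum_nonneg fun i _ => sq_nonneg _)]
  exact Real.sqrt_le_sqrt h

lemma quad_bound {u : E} {H : Matrix (Fin d) (Fin d) ℝ} :
    |∑ a, ∑ b, u a * u b * H a b| ≤ (∑ a, u a ^ 2) * frobNorm H := by
  have h1 : (∑ a, ∑ b, u a * u b * H a b)
      = ∑ p : Fin d × Fin d, (u p.1 * u p.2) * H p.1 p.2 := by
    rw [Fintype.sum_prod_type]
  rw [h1]
  have hcs := abs_CS (fun p : Fin d × Fin d => u p.1 * u p.2) (fun p => H p.1 p.2)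
  have h2 : Real.sqrt (∑ p : Fin d × Fin d, (u p.1 * u p.2) ^ 2) = ∑ a, u a ^ 2 := by
    have he : (∑ p : Fin d × Fin d, (u p.1 * u p.2) ^ 2) = (∑ a, u a ^ 2) ^ 2 := by
      rw [Fintype.sum_prod_type, sq (∑ a, u a ^ 2), Finset.sum_mul_sum]
      simp [mul_pow]
    rw [he, Real.sqrt_sq (Finset.sum_nonneg fun i _ => sq_nonneg _)]
  have h3 : Real.sqrt (∑ p : Fin d × Fin d, (H p.1 p.2) ^ 2) = frobNorm H := by
    rw [frobNorm, Fintype.sum_prod_type]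
  rw [h2, h3] at hcs
  exact hcs

lemma line_deriv1 {f : E → ℝ} (hf : ContDiff ℝ 2 f) (x u : E) (t : ℝ) :
    HasDerivAt (fun s : ℝ => f (x + s • u)) (fderiv ℝ f (x + t • u) u) t := by
  have hL : HasDerivAt (fun s : ℝ => x + s • u) u t := by
    simpa using ((hasDerivAt_id t).smul_const u).const_add x
  exact ((hf.differentiable two_ne_zero (x + t • u)).hasFDerivAt).comp_hasDerivAt t hL

lemma line_deriv2 {f : E → ℝ} (hf : ContDiff ℝ 2 f) (x u : E) (t : ℝ) :
    HasDerivAt (fun s : ℝ => fderiv ℝ f (x + s • u) u)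
      (fderiv ℝ (fderiv ℝ f) (x + t • u) u u) t := by
  have hL : HasDerivAt (fun s : ℝ => x + s • u) u t := by
    simpa using ((hasDerivAt_id t).smul_const u).const_add x
  have h1 : HasFDerivAt (fderiv ℝ f) (fderiv ℝ (fderiv ℝ f) (x + t • u)) (x + t • u) :=
    (((hf.fderiv_right (by norm_num : (1:WithTop ℕ∞)+1 ≤ 2)).differentiable one_ne_zero) _).hasFDerivAt
  have h2 := h1.comp_hasDerivAt t hL
  have h3 := ((ContinuousLinearMap.apply ℝ ℝ u).hasFDerivAt
      (x := fderiv ℝ f (x + t • u))).comp_hasDerivAt t h2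
  exact h3

lemma D2_sum_expand {ι : Type*} [Fintype ι] (fs : ι → E → ℝ) (c : ι → ℝ)
    (hfs : ∀ p, ContDiff ℝ 2 (fs p)) (x u : E) :
    fderiv ℝ (fderiv ℝ (fun y => ∑ p, c p * fs p y)) x u u
      = ∑ p, c p * fderiv ℝ (fderiv ℝ (fs p)) x u u := by
  have hdiff : ∀ p (y : E), DifferentiableAt ℝ (fs p) y :=
    fun p y => (hfs p).differentiable two_ne_zero y
  have hstep1 : fderiv ℝ (fun y => ∑ p, c p * fs p y)
      = fun y => ∑ p, c p • fderiv ℝ (fs p) y := by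
    funext y
    rw [fderiv_fun_sum (fun p _ => ((hdiff p y).const_mul (c p)))]
    exact Finset.sum_congr rfl fun p _ => fderiv_const_mul (hdiff p y) (c p)
  have hC1 : ∀ p, Differentiable ℝ (fderiv ℝ (fs p)) :=
    fun p => ((hfs p).fderiv_right (by norm_num : (1:WithTop ℕ∞)+1 ≤ 2)).differentiable one_ne_zero
  rw [hstep1]
  rw [fderiv_fun_sum (A := fun p y => c p • fderiv ℝ (fs p) y) (fun p _ => ((hC1 p x).const_smul (c p)))]
  rw [ContinuousLinearMap.sum_apply, ContinuousLinearMap.sum_apply, Finset.sum_congr rfl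
    (fun p _ => by rw [fderiv_fun_const_smul (hC1 p x) (c p)])]
  simp [smul_eq_mul]

lemma matrixConvex_G {l : ℕ} (F : E → Matrix (Fin l) (Fin l) ℝ)
    (hsymm : ∀ x, (F x).IsSymm)
    (hC2 : ∀ i j, ContDiff ℝ 2 fun x => F x i j)
    (M : ℝ) (hM : 0 < M)
    (hbound : ∀ x i j, frobNorm (hessMatrix (fun y => F y i j) x) ≤ M)
    (μ : ℝ) (hμ : (l : ℝ) * M ≤ μ) :
    MatrixConvex (fun x => F x + (μ / 2 * ‖x‖ ^ 2) • (1 : Matrix (Fin l) (Fin l) ℝ)) := by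
  set Gm : E → Matrix (Fin l) (Fin l) ℝ :=
    fun x => F x + (μ / 2 * ‖x‖ ^ 2) • (1 : Matrix (Fin l) (Fin l) ℝ) with hGm
  intro x₁ x₂ α hα
  obtain ⟨hα0, hα1⟩ := hα
  have hGs : ∀ x, (Gm x)ᵀ = Gm x := by
    intro x
    rw [hGm]
    simp only [transpose_add, transpose_smul, transpose_one]
    rw [hsymm x]
  rw [Matrix.posSemidef_iff_dotProduct_mulVec]
  constructor
  · show (α • Gm x₁ + (1 - α) • Gm x₂ - Gm (α • x₁ + (1 - α) • x₂)).IsSymm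
    show _ = _
    rw [transpose_sub, transpose_add, transpose_smul, transpose_smul, hGs, hGs, hGs]
  intro w
  have hstar : star w = w := by simp
  rw [hstar]
  -- scalar quadratic form setup
  set u : E := x₁ - x₂ with hu
  set c : Fin l × Fin l → ℝ := fun p => w p.1 * w p.2 with hc
  set φ : E → ℝ := fun x => ∑ p : Fin l × Fin l, c p * F x p.1 p.2 with hφ
  have hφC2 : ContDiff ℝ 2 φ :=
    ContDiff.sum fun p _ => contDiff_const.mul (hC2 p.1 p.2)
  set W : ℝ := ∑ i, w i ^ 2 with hW
  have hW0 : 0 ≤ W := Finset.sum_nonneg fun i _ => sq_nonneg _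
  have hU0 : (0:ℝ) ≤ ‖u‖ ^ 2 := sq_nonneg _
  have hUsum : ‖u‖ ^ 2 = ∑ a, u a ^ 2 := by
    rw [EuclideanSpace.norm_eq, Real.sq_sqrt (Finset.sum_nonneg fun i _ => sq_nonneg _)]
    simp [Real.norm_eq_abs, sq_abs]
  -- second-derivative bound for φ
  have hD2φ : ∀ y : E, |fderiv ℝ (fderiv ℝ φ) y u u| ≤ ((l:ℝ) * M) * W * ‖u‖ ^ 2 := by
    intro y
    rw [hφ, D2_sum_expand (fun p => fun x => F x p.1 p.2) c (fun p => hC2 p.1 p.2) y u]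
    have hterm : ∀ p : Fin l × Fin l,
        |fderiv ℝ (fderiv ℝ (fun x => F x p.1 p.2)) y u u| ≤ M * ‖u‖ ^ 2 := by
      intro p
      rw [D2_expand (hC2 p.1 p.2) y u]
      calc |∑ a, ∑ b, u a * u b * hessMatrix (fun x => F x p.1 p.2) y a b|
          ≤ (∑ a, u a ^ 2) * frobNorm (hessMatrix (fun x => F x p.1 p.2) y) := quad_bound
        _ ≤ (∑ a, u a ^ 2) * M := by
            apply mul_le_mul_of_nonneg_left (hbound y p.1 p.2)
              (Finset.sum_nonneg fun i _ => sq_nonneg _)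
        _ = M * ‖u‖ ^ 2 := by rw [hUsum]; ring
    calc |∑ p : Fin l × Fin l, c p * fderiv ℝ (fderiv ℝ (fun x => F x p.1 p.2)) y u u|
        ≤ ∑ p : Fin l × Fin l, |c p * fderiv ℝ (fderiv ℝ (fun x => F x p.1 p.2)) y u u| :=
          Finset.abs_sum_le_sum_abs _ _
      _ ≤ ∑ p : Fin l × Fin l, |c p| * (M * ‖u‖ ^ 2) := by
          apply Finset.sum_le_sum
          intro p _
          rw [abs_mul]
          exact mul_le_mul_of_nonneg_left (hterm p) (abs_nonneg _)
      _ = (∑ p : Fin l × Fin l, |c p|) * (M * ‖u‖ ^ 2) := by rw [Finset.sum_mul]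
      _ ≤ ((l:ℝ) * W) * (M * ‖u‖ ^ 2) := by
          apply mul_le_mul_of_nonneg_right _ (by positivity)
          have hsum : (∑ p : Fin l × Fin l, |c p|) = (∑ i, |w i|) ^ 2 := by
            rw [sq, Finset.sum_mul_sum, Fintype.sum_prod_type]
            exact Finset.sum_congr rfl fun i _ => Finset.sum_congr rfl fun j _ => by
              simp [hc, abs_mul]
          have hCS2 := Finset.sum_mul_sq_le_sq_mul_sq Finset.univ (fun i : Fin l => |w i|)
            (fun _ => (1:ℝ))
          simp only [mul_one, one_pow, sq_abs, Finset.sum_const, Finset.card_univ,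
            Fintype.card_fin, nsmul_eq_mul] at hCS2
          rw [hsum]
          calc (∑ i, |w i|) ^ 2 ≤ (∑ i, w i ^ 2) * ((l:ℝ)) := by exact_mod_cast hCS2
            _ = (l:ℝ) * W := by rw [hW]; ring
      _ = ((l:ℝ) * M) * W * ‖u‖ ^ 2 := by ring
  -- the 1-D function h
  set K : ℝ := μ / 2 * W * ‖u‖ ^ 2 with hK
  set h : ℝ → ℝ := fun t => φ (x₂ + t • u) + K * t ^ 2 with hh
  have hd1 : ∀ t, HasDerivAt h (fderiv ℝ φ (x₂ + t • u) u + K * (2 * t)) t := by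
    intro t
    have hsq : HasDerivAt (fun s : ℝ => K * s ^ 2) (K * (2 * t)) t := by
      simpa [pow_one] using (hasDerivAt_pow 2 t).const_mul K
    exact (line_deriv1 hφC2 x₂ u t).add hsq
  have hderiv_h : deriv h = fun t => fderiv ℝ φ (x₂ + t • u) u + K * (2 * t) :=
    funext fun t => (hd1 t).deriv
  have hd2 : ∀ t, HasDerivAt (deriv h)
      (fderiv ℝ (fderiv ℝ φ) (x₂ + t • u) u u + K * 2) t := by
    intro t
    rw [hderiv_h]
    have hlin : HasDerivAt (fun s : ℝ => K * (2 * s)) (K * 2) t := by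
      simpa [mul_assoc] using ((hasDerivAt_id t).const_mul (2:ℝ)).const_mul K
    exact (line_deriv2 hφC2 x₂ u t).add hlin
  have hdiffh : Differentiable ℝ h := fun t => (hd1 t).differentiableAt
  have hconv : ConvexOn ℝ Set.univ h := by
    apply convexOn_of_deriv2_nonneg convex_univ hdiffh.continuous.continuousOn
      hdiffh.differentiableOn
      (fun t _ => ((hd2 t).differentiableAt).differentiableWithinAt)
    intro t _
    have hit : deriv^[2] h t = deriv (deriv h) t := rfl
    rw [hit, (hd2 t).deriv]
    have hlow := (abs_le.mp (hD2φ (x₂ + t • u))).1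
    have hmono : ((l:ℝ) * M) * W * ‖u‖ ^ 2 ≤ μ * W * ‖u‖ ^ 2 := by
      apply mul_le_mul_of_nonneg_right _ hU0
      exact mul_le_mul_of_nonneg_right hμ hW0
    have hK2 : K * 2 = μ * W * ‖u‖ ^ 2 := by rw [hK]; ring
    linarith
  have key : h α ≤ α * h 1 + (1 - α) * h 0 := by
    have hcc := hconv.2 (Set.mem_univ (1:ℝ)) (Set.mem_univ (0:ℝ)) hα0
      (by linarith : (0:ℝ) ≤ 1 - α) (by ring)
    simpa using hcc
  -- quadratic form values
  have hQ : ∀ x : E, w ⬝ᵥ (Gm x) *ᵥ w = φ x + (μ / 2 * W) * ‖x‖ ^ 2 := by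
    intro x
    rw [hGm]
    simp only [add_mulVec, dotProduct_add, smul_mulVec, one_mulVec, dotProduct_smul,
      smul_eq_mul]
    have hp1 : w ⬝ᵥ (F x) *ᵥ w = φ x := by
      rw [hφ]
      simp only [dotProduct, mulVec, Fintype.sum_prod_type]
      refine Finset.sum_congr rfl fun i _ => ?_
      rw [Finset.mul_sum]
      exact Finset.sum_congr rfl fun j _ => by rw [hc]; simp [dotProduct]; ring
    have hp2 : w ⬝ᵥ w = W := by
      rw [hW]
      simp only [dotProduct]
      exact Finset.sum_congr rfl fun i _ => (sq (w i)).symm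
    rw [hp1, hp2]
    ring
  have hnorm : ∀ t : ℝ, ‖x₂ + t • u‖ ^ 2
      = ‖x₂‖ ^ 2 + 2 * (t * (inner ℝ x₂ u : ℝ)) + t ^ 2 * ‖u‖ ^ 2 := by
    intro t
    rw [norm_add_sq_real, real_inner_smul_right, norm_smul]
    simp [mul_pow, sq_abs]
  have hs : ∀ t : ℝ, w ⬝ᵥ (Gm (x₂ + t • u)) *ᵥ w
      = h t + (μ * W * (inner ℝ x₂ u : ℝ)) * t + μ / 2 * W * ‖x₂‖ ^ 2 := by
    intro t
    rw [hQ (x₂ + t • u), hnorm t, hh, hK]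
    ring
  have hL1 : x₂ + (1:ℝ) • u = x₁ := by rw [hu]; module
  have hL0 : x₂ + (0:ℝ) • u = x₂ := by module
  have hLα : x₂ + α • u = α • x₁ + (1 - α) • x₂ := by rw [hu]; module
  have hexp : w ⬝ᵥ (α • Gm x₁ + (1 - α) • Gm x₂ - Gm (α • x₁ + (1 - α) • x₂)) *ᵥ w
      = α * (w ⬝ᵥ (Gm x₁) *ᵥ w) + (1 - α) * (w ⬝ᵥ (Gm x₂) *ᵥ w)
        - (w ⬝ᵥ (Gm (α • x₁ + (1 - α) • x₂)) *ᵥ w) := by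
    simp [add_mulVec, sub_mulVec, smul_mulVec, dotProduct_add, dotProduct_sub,
      dotProduct_smul, smul_eq_mul]
  have e1 : w ⬝ᵥ (Gm x₁) *ᵥ w
      = h 1 + (μ * W * (inner ℝ x₂ u : ℝ)) * 1 + μ / 2 * W * ‖x₂‖ ^ 2 := by
    conv_lhs => rw [← hL1]
    exact hs 1
  have e0 : w ⬝ᵥ (Gm x₂) *ᵥ w
      = h 0 + (μ * W * (inner ℝ x₂ u : ℝ)) * 0 + μ / 2 * W * ‖x₂‖ ^ 2 := by
    conv_lhs => rw [← hL0]
    exact hs 0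
  have eα : w ⬝ᵥ (Gm (α • x₁ + (1 - α) • x₂)) *ᵥ w
      = h α + (μ * W * (inner ℝ x₂ u : ℝ)) * α + μ / 2 * W * ‖x₂‖ ^ 2 := by
    conv_lhs => rw [← hLα]
    exact hs α
  rw [hexp, e1, e0, eα]
  have hfin : α * (h 1 + μ * W * (inner ℝ x₂ u : ℝ) * 1 + μ / 2 * W * ‖x₂‖ ^ 2)
      + (1 - α) * (h 0 + μ * W * (inner ℝ x₂ u : ℝ) * 0 + μ / 2 * W * ‖x₂‖ ^ 2)
      - (h α + μ * W * (inner ℝ x₂ u : ℝ) * α + μ / 2 * W * ‖x₂‖ ^ 2)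
      = α * h 1 + (1 - α) * h 0 - h α := by ring
  rw [hfin]
  linarith

lemma matrixConvex_H {l : ℕ} (μ : ℝ) (hμ0 : 0 ≤ μ) :
    MatrixConvex (fun x : E => (μ / 2 * ‖x‖ ^ 2) • (1 : Matrix (Fin l) (Fin l) ℝ)) := by
  intro x₁ x₂ α hα
  obtain ⟨hα0, hα1⟩ := hα
  set e : ℝ := α * (μ / 2 * ‖x₁‖ ^ 2) + (1 - α) * (μ / 2 * ‖x₂‖ ^ 2)
    - μ / 2 * ‖α • x₁ + (1 - α) • x₂‖ ^ 2 with he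
  have he0 : 0 ≤ e := by
    have hc : ‖α • x₁ + (1 - α) • x₂‖ ≤ α * ‖x₁‖ + (1 - α) * ‖x₂‖ := by
      calc ‖α • x₁ + (1 - α) • x₂‖ ≤ ‖α • x₁‖ + ‖(1 - α) • x₂‖ := norm_add_le _ _
        _ = α * ‖x₁‖ + (1 - α) * ‖x₂‖ := by
            rw [norm_smul, norm_smul, Real.norm_eq_abs, Real.norm_eq_abs,
              abs_of_nonneg hα0, abs_of_nonneg (by linarith : (0:ℝ) ≤ 1 - α)]
    have hnn : (0:ℝ) ≤ ‖α • x₁ + (1 - α) • x₂‖ := norm_nonneg _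
    have h2 : ‖α • x₁ + (1 - α) • x₂‖ ^ 2 ≤ (α * ‖x₁‖ + (1 - α) * ‖x₂‖) ^ 2 :=
      pow_le_pow_left₀ hnn hc 2
    have h3 : (α * ‖x₁‖ + (1 - α) * ‖x₂‖) ^ 2 ≤ α * ‖x₁‖ ^ 2 + (1 - α) * ‖x₂‖ ^ 2 := by
      nlinarith [mul_nonneg (mul_nonneg hα0 (by linarith : (0:ℝ) ≤ 1 - α))
        (sq_nonneg (‖x₁‖ - ‖x₂‖))]
    have hsq : ‖α • x₁ + (1 - α) • x₂‖ ^ 2 ≤ α * ‖x₁‖ ^ 2 + (1 - α) * ‖x₂‖ ^ 2 :=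
      le_trans h2 h3
    rw [he]
    nlinarith
  have hmat : α • ((μ / 2 * ‖x₁‖ ^ 2) • (1 : Matrix (Fin l) (Fin l) ℝ))
      + (1 - α) • ((μ / 2 * ‖x₂‖ ^ 2) • (1 : Matrix (Fin l) (Fin l) ℝ))
      - (μ / 2 * ‖α • x₁ + (1 - α) • x₂‖ ^ 2) • (1 : Matrix (Fin l) (Fin l) ℝ)
      = e • (1 : Matrix (Fin l) (Fin l) ℝ) := by
    rw [smul_smul, smul_smul, ← add_smul, ← sub_smul, he]
  show (α • ((μ / 2 * ‖x₁‖ ^ 2) • (1 : Matrix (Fin l) (Fin l) ℝ))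
      + (1 - α) • ((μ / 2 * ‖x₂‖ ^ 2) • (1 : Matrix (Fin l) (Fin l) ℝ))
      - (μ / 2 * ‖α • x₁ + (1 - α) • x₂‖ ^ 2) • (1 : Matrix (Fin l) (Fin l) ℝ)).PosSemidef
  rw [hmat]
  rw [Matrix.posSemidef_iff_dotProduct_mulVec]
  constructor
  · show _ = _
    simp [Matrix.conjTranspose_smul, Matrix.conjTranspose_one]
  · intro v
    have : star v ⬝ᵥ (e • (1 : Matrix (Fin l) (Fin l) ℝ)) *ᵥ v = e * (v ⬝ᵥ v) := by
      rw [smul_mulVec, one_mulVec, dotProduct_smul]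
      simp
    rw [this]
    exact mul_nonneg he0 (Finset.sum_nonneg fun i _ => mul_self_nonneg _)

theorem stmt_0 {d l : ℕ} (F : EuclideanSpace ℝ (Fin d) → Matrix (Fin l) (Fin l) ℝ)
    (hsymm : ∀ x, (F x).IsSymm)
    (hC2 : ∀ i j, ContDiff ℝ 2 fun x => F x i j)
    (M : ℝ) (hM : 0 < M)
    (hbound : ∀ x i j, frobNorm (hessMatrix (fun y => F y i j) x) ≤ M)
    (μ : ℝ) (hμ : (l : ℝ) * M ≤ μ) :
    (∃ G H : EuclideanSpace ℝ (Fin d) → Matrix (Fin l) (Fin l) ℝ,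
      MatrixConvex G ∧ MatrixConvex H ∧ F = G - H) ∧
    MatrixConvex (fun x => F x + (μ / 2 * ‖x‖ ^ 2) • (1 : Matrix (Fin l) (Fin l) ℝ)) ∧
    MatrixConvex (fun x : EuclideanSpace ℝ (Fin d) =>
      (μ / 2 * ‖x‖ ^ 2) • (1 : Matrix (Fin l) (Fin l) ℝ)) ∧
    ∀ x, F x = (F x + (μ / 2 * ‖x‖ ^ 2) • (1 : Matrix (Fin l) (Fin l) ℝ)) -
      (μ / 2 * ‖x‖ ^ 2) • (1 : Matrix (Fin l) (Fin l) ℝ) := by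
  have hμ0 : 0 ≤ μ := le_trans (by positivity) hμ
  have hG := matrixConvex_G F hsymm hC2 M hM hbound μ hμ
  have hH := matrixConvex_H (l := l) (d := d) μ hμ0
  refine ⟨⟨_, _, hG, hH, ?_⟩, hG, hH, fun x => by rw [add_sub_cancel_right]⟩
  funext x
  simp [add_sub_cancel_right]
end

section
/- Let F : ℝ^d → S^ℓ be componentwise DC and let F_ij = G_ij − H_ij be a DC decomposition of each component of F, where G_ij, H_ij : ℝ^d → ℝ are convex, i, j ∈ {1,…,ℓ}. Define g(x) = max over v ∈ ℝ^ℓ with |v| ≤ 1 of Σ_{i,j=1}^{ℓ} ((v_i v_j + 1) G_ij(x) + (1 − v_i v_j) H_ij(x)) and h(x) = Σ_{i,j=1}^{ℓ} (G_ij(x) + H_ij(x)). Then g and h are convex real-valued functions and λ_max(F(x)) = g(x) − h(x) for all x ∈ ℝ^d, i.e. (g, h) is a DC decomposition of the maximal eigenvalue function λ_max(F(·)). -/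
open Matrix

/-- The maximal eigenvalue of a symmetric matrix, characterized via the Rayleigh quotient:
`λ_max(A) = max_{‖v‖ ≤ 1} ⟨v, A v⟩`. -/
noncomputable def lamMax {l : ℕ} (A : Matrix (Fin l) (Fin l) ℝ) : ℝ :=
  sSup {r : ℝ | ∃ v : EuclideanSpace ℝ (Fin l), ‖v‖ ≤ 1 ∧ r = ∑ i, ∑ j, v i * A i j * v j}

lemma convexOn_finset_sum' {E ι : Type*} [AddCommGroup E] [Module ℝ E]
    (t : Finset ι) (f : ι → E → ℝ) (hf : ∀ i ∈ t, ConvexOn ℝ Set.univ (f i)) :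
    ConvexOn ℝ Set.univ (fun x => ∑ i ∈ t, f i x) := by
  classical
  induction t using Finset.cons_induction with
  | empty => simpa using convexOn_const (0:ℝ) convex_univ
  | cons a s ha ih =>
    simp only [Finset.sum_cons]
    exact (hf a (Finset.mem_cons_self a s)).add
      (ih fun i hi => hf i (Finset.mem_cons_of_mem hi))

lemma sSup_add_const {T : Set ℝ} (hne : T.Nonempty) (hbdd : BddAbove T) (c : ℝ) :
    sSup ((fun r => r + c) '' T) = sSup T + c :=
  ((OrderIso.addRight c).map_csSup' hne hbdd).symm

lemma coord_le {l : ℕ} (v : EuclideanSpace ℝ (Fin l)) (i : Fin l) : |v i| ≤ ‖v‖ := by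
  rw [EuclideanSpace.norm_eq, ← Real.sqrt_sq (abs_nonneg (v i))]
  apply Real.sqrt_le_sqrt
  calc |v i| ^ 2 = ‖v i‖ ^ 2 := by rw [Real.norm_eq_abs]
    _ ≤ ∑ j, ‖v j‖ ^ 2 :=
      Finset.single_le_sum (f := fun j => ‖v j‖ ^ 2) (fun j _ => by positivity)
        (Finset.mem_univ i)

theorem stmt_5 {d l : ℕ} (F : EuclideanSpace ℝ (Fin d) → Matrix (Fin l) (Fin l) ℝ)
    (hsymm : ∀ x, (F x).IsSymm)
    (Gm Hm : Fin l → Fin l → EuclideanSpace ℝ (Fin d) → ℝ)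
    (hGconv : ∀ i j, ConvexOn ℝ Set.univ (Gm i j))
    (hHconv : ∀ i j, ConvexOn ℝ Set.univ (Hm i j))
    (hdec : ∀ i j x, F x i j = Gm i j x - Hm i j x)
    (g h : EuclideanSpace ℝ (Fin d) → ℝ)
    (hg : ∀ x, g x = sSup {r : ℝ | ∃ v : EuclideanSpace ℝ (Fin l), ‖v‖ ≤ 1 ∧
      r = ∑ i, ∑ j, ((v i * v j + 1) * Gm i j x + (1 - v i * v j) * Hm i j x)})
    (hh : ∀ x, h x = ∑ i, ∑ j, (Gm i j x + Hm i j x)) :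
    ConvexOn ℝ Set.univ g ∧ ConvexOn ℝ Set.univ h ∧ ∀ x, lamMax (F x) = g x - h x := by
  classical
  -- the two function families
  set φ : EuclideanSpace ℝ (Fin l) → EuclideanSpace ℝ (Fin d) → ℝ :=
    fun v x => ∑ i, ∑ j, ((v i * v j + 1) * Gm i j x + (1 - v i * v j) * Hm i j x) with hφdef
  set ψ : EuclideanSpace ℝ (Fin d) → EuclideanSpace ℝ (Fin l) → ℝ :=
    fun x v => ∑ i, ∑ j, v i * F x i j * v j with hψdef
  have hgS : ∀ x, g x = sSup {r : ℝ | ∃ v : EuclideanSpace ℝ (Fin l), ‖v‖ ≤ 1 ∧ r = φ v x} := hg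
  have hlam : ∀ x, lamMax (F x) =
      sSup {r : ℝ | ∃ v : EuclideanSpace ℝ (Fin l), ‖v‖ ≤ 1 ∧ r = ψ x v} := fun x => rfl
  -- key pointwise identity
  have key : ∀ x v, φ v x = ψ x v + h x := by
    intro x v
    rw [hh x]
    show (∑ i, ∑ j, _) = (∑ i, ∑ j, _ : ℝ) + ∑ i, ∑ j, _
    rw [← Finset.sum_add_distrib]
    refine Finset.sum_congr rfl fun i _ => ?_
    rw [← Finset.sum_add_distrib]
    refine Finset.sum_congr rfl fun j _ => ?_
    rw [hdec]
    ring
  -- coefficient nonnegativity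
  have hcoef : ∀ (v : EuclideanSpace ℝ (Fin l)), ‖v‖ ≤ 1 → ∀ i j : Fin l,
      0 ≤ v i * v j + 1 ∧ 0 ≤ 1 - v i * v j := by
    intro v hv i j
    have h1 : |v i * v j| ≤ 1 := by
      rw [abs_mul]
      calc |v i| * |v j| ≤ 1 * 1 :=
            mul_le_mul ((coord_le v i).trans hv) ((coord_le v j).trans hv)
              (abs_nonneg _) zero_le_one
        _ = 1 := one_mul 1
    rw [abs_le] at h1
    constructor <;> linarith [h1.1, h1.2]
  -- the Rayleigh set is nonempty and bounded above
  have hψcont : ∀ x, Continuous (ψ x) := by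
    intro x
    apply continuous_finset_sum
    intro i _
    apply continuous_finset_sum
    intro j _
    exact ((EuclideanSpace.proj i).continuous.mul continuous_const).mul
      (EuclideanSpace.proj j).continuous
  have hTim : ∀ x, {r : ℝ | ∃ v : EuclideanSpace ℝ (Fin l), ‖v‖ ≤ 1 ∧ r = ψ x v}
      = ψ x '' Metric.closedBall 0 1 := by
    intro x
    ext r
    constructor
    · rintro ⟨v, hv, rfl⟩
      exact ⟨v, by simpa [mem_closedBall_zero_iff] using hv, rfl⟩
    · rintro ⟨v, hv, rfl⟩
      exact ⟨v, by simpa [mem_closedBall_zero_iff] using hv, rfl⟩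
  have hTne : ∀ x, {r : ℝ | ∃ v : EuclideanSpace ℝ (Fin l), ‖v‖ ≤ 1 ∧ r = ψ x v}.Nonempty :=
    fun x => ⟨ψ x 0, 0, by simp, rfl⟩
  have hTbdd : ∀ x, BddAbove {r : ℝ | ∃ v : EuclideanSpace ℝ (Fin l), ‖v‖ ≤ 1 ∧ r = ψ x v} := by
    intro x
    rw [hTim x]
    exact ((isCompact_closedBall (0 : EuclideanSpace ℝ (Fin l)) 1).image (hψcont x)).bddAbove
  -- translation relation between the two sets
  have hSim : ∀ x, {r : ℝ | ∃ v : EuclideanSpace ℝ (Fin l), ‖v‖ ≤ 1 ∧ r = φ v x}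
      = (fun r => r + h x) '' {r : ℝ | ∃ v : EuclideanSpace ℝ (Fin l), ‖v‖ ≤ 1 ∧ r = ψ x v} := by
    intro x
    ext r
    constructor
    · rintro ⟨v, hv, rfl⟩
      exact ⟨ψ x v, ⟨v, hv, rfl⟩, (key x v).symm⟩
    · rintro ⟨s, ⟨v, hv, rfl⟩, rfl⟩
      exact ⟨v, hv, (key x v).symm⟩
  have hSne : ∀ x, {r : ℝ | ∃ v : EuclideanSpace ℝ (Fin l), ‖v‖ ≤ 1 ∧ r = φ v x}.Nonempty :=
    fun x => ⟨φ 0 x, 0, by simp, rfl⟩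
  have hSbdd : ∀ x, BddAbove {r : ℝ | ∃ v : EuclideanSpace ℝ (Fin l), ‖v‖ ≤ 1 ∧ r = φ v x} := by
    intro x
    rw [hSim x]
    obtain ⟨B, hB⟩ := hTbdd x
    exact ⟨B + h x, by rintro r ⟨s, hs, rfl⟩; exact add_le_add_left (hB hs) _⟩
  -- g = sSup of translated set = lamMax + h
  have hgval : ∀ x, g x = lamMax (F x) + h x := by
    intro x
    rw [hgS x, hSim x, sSup_add_const (hTne x) (hTbdd x), hlam x]
  -- convexity of each φ v
  have hφconv : ∀ (v : EuclideanSpace ℝ (Fin l)), ‖v‖ ≤ 1 → ConvexOn ℝ Set.univ (φ v) := by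
    intro v hv
    apply convexOn_finset_sum'
    intro i _
    apply convexOn_finset_sum'
    intro j _
    have h1 := (hGconv i j).smul (hcoef v hv i j).1
    have h2 := (hHconv i j).smul (hcoef v hv i j).2
    have h3 := h1.add h2
    simp only [smul_eq_mul] at h3
    exact h3
  -- convexity of h
  have hhconv : ConvexOn ℝ Set.univ h := by
    have : h = fun x => ∑ i : Fin l, ∑ j : Fin l, (Gm i j x + Hm i j x) := funext hh
    rw [this]
    apply convexOn_finset_sum'
    intro i _
    apply convexOn_finset_sum'
    intro j _
    exact (hGconv i j).add (hHconv i j)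
  -- convexity of g
  have hgconv : ConvexOn ℝ Set.univ g := by
    refine ⟨convex_univ, ?_⟩
    intro x _ y _ a b ha hb hab
    rw [hgS (a • x + b • y)]
    apply csSup_le (hSne _)
    rintro r ⟨v, hv, rfl⟩
    have hx : φ v x ≤ g x := by
      rw [hgS x]; exact le_csSup (hSbdd x) ⟨v, hv, rfl⟩
    have hy : φ v y ≤ g y := by
      rw [hgS y]; exact le_csSup (hSbdd y) ⟨v, hv, rfl⟩
    calc φ v (a • x + b • y) ≤ a • φ v x + b • φ v y :=
          (hφconv v hv).2 (Set.mem_univ x) (Set.mem_univ y) ha hb hab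
      _ ≤ a • g x + b • g y := by
          simp only [smul_eq_mul]
          gcongr
  exact ⟨hgconv, hhconv, fun x => by rw [hgval x]; ring⟩
end

section
/- Let X be a real Banach space, Y a real Banach space, 𝒜 ⊆ X a closed convex set, 𝒦 ⊆ Y a proper cone, and Φ, Ψ : X → Y be 𝒦-convex functions such that Φ is continuous on 𝒜 and Ψ is continuously Fréchet differentiable on 𝒜. Suppose that for some x* ∈ 𝒜 with Φ(x*) − Ψ(x*) ⪯_𝒦 0 the constraint qualification 0 ∈ int{Φ(x) − Ψ(x*) − DΨ(x*)(x − x*) + 𝒦 : x ∈ 𝒜} holds. Then for any x̄ ∈ 𝒜 such that Φ(x̄) − Ψ(x*) − DΨ(x*)(x̄ − x*) ⪯_𝒦 0, there exist a neighbourhood U of x* and a mapping ξ : U ∩ 𝒜 → 𝒜 such that Φ(ξ(z)) − Ψ(z) − DΨ(z)(ξ(z) − z) ⪯_𝒦 0 for all z ∈ U ∩ 𝒜, ξ(x*) = x̄, and ξ(z) → x̄ as z → x*. -/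
open Filter Set

theorem dc_seq' {α : Type*} (P : ℕ → α → Prop) (R : ℕ → α → α → Prop) (a0 : α) (h0 : P 0 a0)
    (hstep : ∀ n a, P n a → ∃ b, P (n+1) b ∧ R n a b) :
    ∃ f : ℕ → α, f 0 = a0 ∧ (∀ n, P n (f n)) ∧ ∀ n, R n (f n) (f (n+1)) := by
  choose! F hF1 hF2 using hstep
  refine ⟨fun n => Nat.rec a0 (fun n ih => F n ih) n, rfl, ?_, ?_⟩
  · intro n
    induction n with
    | zero => exact h0
    | succ n ih => exact hF1 n _ ih
  · intro n
    have hP : ∀ m, P m (Nat.rec a0 (fun n ih => F n ih) m : α) := by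
      intro m
      induction m with
      | zero => exact h0
      | succ m ih => exact hF1 m _ ih
    exact hF2 n _ (hP n)

theorem baire_step' {X Y : Type*} [NormedAddCommGroup X] [NormedSpace ℝ X]
    [NormedAddCommGroup Y] [NormedSpace ℝ Y] [CompleteSpace Y]
    (T : Set (X × Y)) (hTconv : Convex ℝ T)
    (hint : (0:Y) ∈ interior {y | ∃ x, (x, y) ∈ T}) :
    ∃ ρ : ℝ, 0 < ρ ∧ ∃ r : ℝ, 0 < r ∧
      ∀ v : Y, ‖v‖ ≤ 2*r → v ∈ closure {y | ∃ x, ‖x‖ ≤ ρ ∧ (x, y) ∈ T} := by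
  -- get a closed ball inside the projection
  obtain ⟨δ, hδpos, hδ⟩ : ∃ δ > 0, Metric.closedBall (0:Y) δ ⊆ {y | ∃ x, (x, y) ∈ T} := by
    rcases Metric.mem_nhds_iff.mp (mem_interior_iff_mem_nhds.mp hint) with ⟨ε, hε, hball⟩
    exact ⟨ε/2, by linarith, fun y hy =>
      hball (lt_of_le_of_lt (Metric.mem_closedBall.mp hy) (by linarith))⟩
  set C : ℕ → Set Y := fun n => {y | ‖y‖ ≤ δ ∧ ∃ x, ‖x‖ ≤ (n:ℝ) ∧ (x, y) ∈ T} with hC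
  have hCconv : ∀ n, Convex ℝ (C n) := by
    intro n p hp q hq a b ha hb hab
    obtain ⟨hpn, xp, hxp, hxpT⟩ := hp
    obtain ⟨hqn, xq, hxq, hxqT⟩ := hq
    refine ⟨?_, a • xp + b • xq, ?_, hTconv hxpT hxqT ha hb hab⟩
    · calc ‖a • p + b • q‖ ≤ ‖a • p‖ + ‖b • q‖ := norm_add_le _ _
        _ = a * ‖p‖ + b * ‖q‖ := by rw [norm_smul, norm_smul, Real.norm_of_nonneg ha, Real.norm_of_nonneg hb]
        _ ≤ a * δ + b * δ := by
            have := mul_le_mul_of_nonneg_left hpn ha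
            have := mul_le_mul_of_nonneg_left hqn hb
            linarith
        _ = δ := by rw [← add_mul, hab, one_mul]
    · calc ‖a • xp + b • xq‖ ≤ ‖a • xp‖ + ‖b • xq‖ := norm_add_le _ _
        _ = a * ‖xp‖ + b * ‖xq‖ := by rw [norm_smul, norm_smul, Real.norm_of_nonneg ha, Real.norm_of_nonneg hb]
        _ ≤ a * n + b * n := by
            have := mul_le_mul_of_nonneg_left hxp ha
            have := mul_le_mul_of_nonneg_left hxq hb
            linarith
        _ = n := by rw [← add_mul, hab, one_mul]
  have hcover : Metric.closedBall (0:Y) δ ⊆ ⋃ n, C n := by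
    intro y hy
    obtain ⟨x, hxT⟩ := hδ hy
    obtain ⟨n, hn⟩ := exists_nat_ge ‖x‖
    exact mem_iUnion.mpr ⟨n, by simpa using Metric.mem_closedBall.mp hy |>.trans (le_refl _) |> fun h => ⟨by simpa [dist_eq_norm] using Metric.mem_closedBall.mp hy, x, hn, hxT⟩⟩
  -- Baire : some closure (C n) has nonempty interior
  have hBaire : ∃ n, (interior (closure (C n))).Nonempty := by
    by_contra hcon
    push_neg at hcon
    have hmeag : IsMeagre (⋃ n, closure (C n)) := by
      apply isMeagre_iUnion
      intro n
      have hemp : interior (closure (C n)) = ∅ := hcon n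
      exact residual_of_dense_open isClosed_closure.isOpen_compl
        (interior_eq_empty_iff_dense_compl.mp hemp)
    have hdense : Dense (⋃ n, closure (C n))ᶜ := dense_of_mem_residual hmeag
    obtain ⟨z, hz1, hz2⟩ := hdense.inter_open_nonempty (Metric.ball 0 δ) Metric.isOpen_ball
      ⟨0, Metric.mem_ball_self hδpos⟩
    refine hz2 (mem_iUnion.mpr ?_)
    obtain ⟨n, hn⟩ := mem_iUnion.mp (hcover (Metric.ball_subset_closedBall hz1))
    exact ⟨n, subset_closure hn⟩
  obtain ⟨n, y₀, hy₀⟩ := hBaire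
  have hy₀cl : y₀ ∈ closure (C n) := interior_subset hy₀
  have hy₀δ : ‖y₀‖ ≤ δ := by
    have : closure (C n) ⊆ {y : Y | ‖y‖ ≤ δ} :=
      closure_minimal (fun y hy => hy.1) (isClosed_le (by continuity) continuous_const)
    exact this hy₀cl
  obtain ⟨m, hm⟩ := mem_iUnion.mp (hcover (by simpa [dist_eq_norm] using hy₀δ : -y₀ ∈ Metric.closedBall (0:Y) δ))
  set N := max n m with hN
  have hCmono : ∀ k l : ℕ, k ≤ l → C k ⊆ C l := by
    intro k l hkl y hy
    obtain ⟨h1, x, hx, hxT⟩ := hy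
    exact ⟨h1, x, hx.trans (by exact_mod_cast hkl), hxT⟩
  have hy₀N : y₀ ∈ interior (closure (C N)) :=
    interior_mono (closure_mono (hCmono n N (le_max_left _ _))) hy₀
  have hnegN : -y₀ ∈ closure (C N) := subset_closure (hCmono m N (le_max_right _ _) hm)
  have h0int : (0:Y) ∈ interior (closure (C N)) := by
    have := (hCconv N).closure.combo_interior_closure_mem_interior hy₀N
      (by rwa [closure_closure]) (by norm_num : (0:ℝ) < 1/2) (by norm_num : (0:ℝ) ≤ 1/2) (by norm_num)
    simpa using this
  obtain ⟨ε, hεpos, hεball⟩ : ∃ ε > 0, Metric.closedBall (0:Y) ε ⊆ closure (C N) := by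
    rcases Metric.mem_nhds_iff.mp (mem_interior_iff_mem_nhds.mp h0int) with ⟨ε, hε, hball⟩
    exact ⟨ε/2, by linarith, fun y hy =>
      hball (lt_of_le_of_lt (Metric.mem_closedBall.mp hy) (by linarith))⟩
  refine ⟨(N:ℝ) + 1, by positivity, ε/2, by positivity, fun v hv => ?_⟩
  have : v ∈ closure (C N) := hεball (by simpa [dist_eq_norm] using hv.trans_eq (by ring))
  refine closure_mono ?_ this
  intro y hy
  obtain ⟨_, x, hx, hxT⟩ := hy
  exact ⟨x, hx.trans (by linarith [Nat.cast_nonneg (α := ℝ) N]), hxT⟩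

set_option maxHeartbeats 1000000 in
theorem lemR' {X Y : Type*} [NormedAddCommGroup X] [NormedSpace ℝ X] [CompleteSpace X]
    [NormedAddCommGroup Y] [NormedSpace ℝ Y]
    (T : Set (X × Y)) (hTcl : IsClosed T) (hTconv : Convex ℝ T)
    (ρ r : ℝ) (hρ : 0 < ρ) (hr : 0 < r)
    (hcl : ∀ v : Y, ‖v‖ ≤ 2*r → v ∈ closure {y | ∃ x, ‖x‖ ≤ ρ ∧ (x, y) ∈ T})
    (x' : X) (y' : Y) (hxy' : (x', y') ∈ T) (hx' : ‖x'‖ ≤ ρ) (hy' : ‖y'‖ ≤ r/12)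
    (y : Y) (hy : ‖y‖ ≤ r/12) :
    ∃ x : X, (x, y) ∈ T ∧ ‖x - x'‖ ≤ (6*ρ/r) * ‖y - y'‖ := by
  have hΔ0 : (0:ℝ) ≤ ‖y - y'‖ := norm_nonneg _
  have hΔr : ‖y - y'‖ ≤ r/6 := by
    calc ‖y - y'‖ ≤ ‖y‖ + ‖y'‖ := norm_sub_le _ _
      _ ≤ r/6 := by linarith
  obtain ⟨f, hf0, hfP, hfR⟩ := dc_seq'
    (fun n p => p ∈ T ∧ ‖p.1 - x'‖ ≤ (6*ρ/r) * (1 - (1/2)^n) * ‖y - y'‖ ∧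
      ‖p.2 - y‖ ≤ (1/2)^n * ‖y - y'‖)
    (fun n p q => ‖q.1 - p.1‖ ≤ (3*ρ/r) * ‖y - y'‖ * (1/2)^n)
    (x', y')
    (by
      refine ⟨hxy', by simp, ?_⟩
      simp only [pow_zero, one_mul]
      rw [norm_sub_rev])
    (by
      intro n p hp
      obtain ⟨hpT, hp1, hp2⟩ := hp
      have hpow1 : ((1:ℝ)/2)^n ≤ 1 := pow_le_one₀ (by norm_num) (by norm_num)
      have hpow0 : (0:ℝ) < (1/2)^n := by positivity
      have hd0 : (0:ℝ) ≤ ‖y - p.2‖ := norm_nonneg _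
      have hdΔ : ‖y - p.2‖ ≤ (1/2)^n * ‖y - y'‖ := by rw [norm_sub_rev]; exact hp2
      have hdΔ' : ‖y - p.2‖ ≤ ‖y - y'‖ := hdΔ.trans (by nlinarith)
      set s := ‖y - p.2‖ / r with hs
      have hs0 : 0 ≤ s := by positivity
      have hs1 : s ≤ 1 := by rw [hs, div_le_one hr]; linarith
      have hp1n : ‖p.1‖ ≤ 2*ρ := by
        have h1 : ‖p.1‖ ≤ ‖p.1 - x'‖ + ‖x'‖ := by
          simpa using norm_add_le (p.1 - x') x'
        have h3 : (6*ρ/r) * ‖y - y'‖ ≤ ρ := by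
          rw [div_mul_eq_mul_div, div_le_iff₀ hr]; nlinarith
        nlinarith [mul_nonneg (mul_nonneg (by positivity : (0:ℝ) ≤ 6*ρ/r) hpow0.le) hΔ0]
      have hp2n : ‖p.2‖ ≤ r := by
        have h1 : ‖p.2‖ ≤ ‖p.2 - y‖ + ‖y‖ := by simpa using norm_add_le (p.2 - y) y
        have h2 : ‖p.2 - y‖ ≤ ‖y - y'‖ := hp2.trans (by nlinarith)
        linarith
      set v := p.2 + (r/‖y - p.2‖) • (y - p.2) with hv
      have hvn : ‖v‖ ≤ 2*r := by
        have h2 : ‖(r/‖y - p.2‖) • (y - p.2)‖ ≤ r := by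
          rcases eq_or_lt_of_le hd0 with h | h
          · have hz : y - p.2 = 0 := by rw [← norm_eq_zero, ← h]
            rw [hz, smul_zero, norm_zero]; positivity
          · rw [norm_smul, Real.norm_of_nonneg (by positivity : (0:ℝ) ≤ r/‖y - p.2‖),
              div_mul_cancel₀]
            exact ne_of_gt h
        calc ‖v‖ ≤ ‖p.2‖ + ‖(r/‖y - p.2‖) • (y - p.2)‖ := norm_add_le _ _
          _ ≤ 2*r := by linarith
      have hkey : (1-s) • p.2 + s • v = y := by
        rcases eq_or_lt_of_le hd0 with h | h
        · have hz : y - p.2 = 0 := by rw [← norm_eq_zero, ← h]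
          have hyp : y = p.2 := by rwa [sub_eq_zero] at hz
          rw [hv, hz, smul_zero, add_zero, ← add_smul]
          simp [hyp]
        · have hne : ‖y - p.2‖ ≠ 0 := ne_of_gt h
          rw [hv, smul_add, ← add_assoc, ← add_smul, sub_add_cancel, one_smul,
            smul_smul, hs]
          rw [div_mul_div_comm, mul_comm ‖y - p.2‖ r, div_self (by positivity), one_smul,
            add_sub_cancel]
      obtain ⟨w, hwE, hwv⟩ : ∃ w ∈ {y | ∃ x, ‖x‖ ≤ ρ ∧ (x, y) ∈ T}, dist v w < r/2 :=
        Metric.mem_closure_iff.mp (hcl v hvn) (r/2) (by positivity)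
      obtain ⟨u, hun, huT⟩ := hwE
      have hq1 : ((1-s) • p.1 + s • u) - p.1 = s • (u - p.1) := by module
      have hup : ‖u - p.1‖ ≤ 3*ρ := by
        calc ‖u - p.1‖ ≤ ‖u‖ + ‖p.1‖ := norm_sub_le _ _
          _ ≤ 3*ρ := by linarith
      have hstepb : ‖((1-s) • p.1 + s • u) - p.1‖ ≤ (3*ρ/r) * ‖y - y'‖ * (1/2)^n := by
        rw [hq1, norm_smul, Real.norm_of_nonneg hs0]
        calc s * ‖u - p.1‖ ≤ s * (3*ρ) := by nlinarith
          _ = ‖y - p.2‖ / r * (3*ρ) := by rw [hs]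
          _ ≤ ((1/2)^n * ‖y - y'‖) / r * (3*ρ) := by gcongr
          _ = (3*ρ/r) * ‖y - y'‖ * (1/2)^n := by ring
      refine ⟨((1-s) • p.1 + s • u, (1-s) • p.2 + s • w), ⟨?_, ?_, ?_⟩, hstepb⟩
      · have hmem := hTconv hpT huT (by linarith : (0:ℝ) ≤ 1 - s) hs0 (by ring)
        have heq : (1-s) • p + s • ((u, w) : X × Y)
            = ((1-s) • p.1 + s • u, (1-s) • p.2 + s • w) := rfl
        rwa [heq] at hmem
      · calc ‖((1-s) • p.1 + s • u) - x'‖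
            ≤ ‖((1-s) • p.1 + s • u) - p.1‖ + ‖p.1 - x'‖ := by
              simpa using norm_add_le (((1-s) • p.1 + s • u) - p.1) (p.1 - x')
          _ ≤ (3*ρ/r) * ‖y - y'‖ * (1/2)^n + (6*ρ/r) * (1 - (1/2)^n) * ‖y - y'‖ := by
              linarith [hstepb]
          _ = (6*ρ/r) * (1 - (1/2)^(n+1)) * ‖y - y'‖ := by ring
      · have hq2 : ((1-s) • p.2 + s • w) - y = s • (w - v) := by
          rw [← hkey, smul_sub]; abel
        rw [hq2, norm_smul, Real.norm_of_nonneg hs0]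
        have hwv' : ‖w - v‖ ≤ r/2 := by
          rw [← dist_eq_norm, dist_comm]; exact le_of_lt hwv
        calc s * ‖w - v‖ ≤ s * (r/2) := by nlinarith
          _ = ‖y - p.2‖ / r * (r/2) := by rw [hs]
          _ = ‖y - p.2‖ / 2 := by field_simp
          _ ≤ (1/2)^(n+1) * ‖y - y'‖ := by rw [pow_succ]; nlinarith)
  have hcauchy : CauchySeq (fun n => (f n).1) := by
    apply cauchySeq_of_le_geometric (1/2) ((3*ρ/r) * ‖y - y'‖) (by norm_num)
    intro n
    rw [dist_eq_norm, norm_sub_rev]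
    exact hfR n
  obtain ⟨xe, hxe⟩ := cauchySeq_tendsto_of_complete hcauchy
  have hsnd : Tendsto (fun n => (f n).2) atTop (nhds y) := by
    rw [← tendsto_sub_nhds_zero_iff]
    apply squeeze_zero_norm (fun n => (hfP n).2.2)
    have := tendsto_pow_atTop_nhds_zero_of_lt_one (by norm_num : (0:ℝ) ≤ 1/2)
      (by norm_num : (1:ℝ)/2 < 1)
    simpa using this.mul_const ‖y - y'‖
  have hmemT : (xe, y) ∈ T := by
    have htend : Tendsto f atTop (nhds (xe, y)) := by
      rw [Prod.tendsto_iff]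
      exact ⟨hxe, hsnd⟩
    exact hTcl.mem_of_tendsto htend (Eventually.of_forall fun n => (hfP n).1)
  refine ⟨xe, hmemT, ?_⟩
  have hb : ∀ n, ‖(f n).1 - x'‖ ≤ (6*ρ/r) * ‖y - y'‖ := by
    intro n
    have h1 := (hfP n).2.1
    have hpow1 : ((1:ℝ)/2)^n ≤ 1 := pow_le_one₀ (by norm_num) (by norm_num)
    have hpow0 : (0:ℝ) ≤ (1/2)^n := by positivity
    nlinarith [mul_nonneg (by positivity : (0:ℝ) ≤ 6*ρ/r) hΔ0]
  have hlim : Tendsto (fun n => ‖(f n).1 - x'‖) atTop (nhds ‖xe - x'‖) :=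
    (hxe.sub tendsto_const_nhds).norm
  exact le_of_tendsto hlim (Eventually.of_forall hb)

/-- A function with values in a space ordered by a cone `K` is `K`-convex if
`Φ(αx₁ + (1−α)x₂) ⪯_K αΦ(x₁) + (1−α)Φ(x₂)` for all `x₁, x₂` and `α ∈ [0,1]`. -/
def KConvex {X Y : Type*} [AddCommGroup X] [Module ℝ X] [AddCommGroup Y] [Module ℝ Y]
    (K : Set Y) (Φ : X → Y) : Prop :=
  ∀ (x₁ x₂ : X) (α : ℝ), α ∈ Set.Icc (0 : ℝ) 1 →
    α • Φ x₁ + (1 - α) • Φ x₂ - Φ (α • x₁ + (1 - α) • x₂) ∈ K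


set_option maxHeartbeats 2000000 in
theorem stmt_9 {X Y : Type*}
    [NormedAddCommGroup X] [NormedSpace ℝ X] [CompleteSpace X]
    [NormedAddCommGroup Y] [NormedSpace ℝ Y] [CompleteSpace Y]
    (A : Set X) (hAclosed : IsClosed A) (hAconvex : Convex ℝ A)
    (K : Set Y) (hKclosed : IsClosed K) (hKconvex : Convex ℝ K)
    (hKcone : ∀ c : ℝ, 0 ≤ c → ∀ y ∈ K, c • y ∈ K)
    (hKpointed : K ∩ (-K) = {0})
    (Φ Ψ : X → Y) (hΦconv : KConvex K Φ) (hΨconv : KConvex K Ψ)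
    (hΦcont : ContinuousOn Φ A)
    (DΨ : X → X →L[ℝ] Y)
    (hΨdiff : ∀ x ∈ A, HasFDerivAt Ψ (DΨ x) x)
    (hDΨcont : ContinuousOn DΨ A)
    (xs : X) (hxs : xs ∈ A) (hxsfeas : -(Φ xs - Ψ xs) ∈ K)
    (hCQ : (0 : Y) ∈ interior {y : Y | ∃ x ∈ A, y - (Φ x - Ψ xs - DΨ xs (x - xs)) ∈ K})
    (xb : X) (hxb : xb ∈ A)
    (hxbfeas : -(Φ xb - Ψ xs - DΨ xs (xb - xs)) ∈ K) :
    ∃ U ∈ nhds xs, ∃ ξ : X → X,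
      (∀ z ∈ U ∩ A, ξ z ∈ A ∧ -(Φ (ξ z) - Ψ z - DΨ z (ξ z - z)) ∈ K) ∧
      ξ xs = xb ∧ Filter.Tendsto ξ (nhdsWithin xs A) (nhds xb) := by
  classical
  have Kadd : ∀ u ∈ K, ∀ v ∈ K, u + v ∈ K := by
    intro u hu v hv
    have h := hKconvex hu hv (by norm_num : (0:ℝ) ≤ 1/2) (by norm_num : (0:ℝ) ≤ 1/2)
      (by norm_num)
    have h2 := hKcone 2 (by norm_num) _ h
    rwa [smul_add, smul_smul, smul_smul, (by norm_num : (2:ℝ) * (1/2) = 1), one_smul,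
      one_smul] at h2
  set T : Set (X × Y) :=
    {p | xb + p.1 ∈ A ∧ p.2 - (Φ (xb + p.1) - Ψ xs - DΨ xs (xb + p.1 - xs)) ∈ K} with hT
  -- convexity of T
  have hkeyconv : ∀ x₁ x₂ : X, ∀ a : ℝ, 0 ≤ a → a ≤ 1 →
      a • (Φ x₁ - Ψ xs - DΨ xs (x₁ - xs)) + (1-a) • (Φ x₂ - Ψ xs - DΨ xs (x₂ - xs))
        - (Φ (a • x₁ + (1-a) • x₂) - Ψ xs - DΨ xs (a • x₁ + (1-a) • x₂ - xs)) ∈ K := by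
    intro x₁ x₂ a ha0 ha1
    have h := hΦconv x₁ x₂ a ⟨ha0, ha1⟩
    have heq : a • (Φ x₁ - Ψ xs - DΨ xs (x₁ - xs)) + (1-a) • (Φ x₂ - Ψ xs - DΨ xs (x₂ - xs))
        - (Φ (a • x₁ + (1-a) • x₂) - Ψ xs - DΨ xs (a • x₁ + (1-a) • x₂ - xs))
        = a • Φ x₁ + (1-a) • Φ x₂ - Φ (a • x₁ + (1-a) • x₂) := by
      have e1 : DΨ xs (a • x₁ + (1-a) • x₂ - xs)
          = a • DΨ xs (x₁ - xs) + (1-a) • DΨ xs (x₂ - xs) := by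
        rw [map_sub, map_add, map_smul, map_smul, map_sub, map_sub]
        module
      rw [e1]
      module
    rw [heq]
    exact h
  have hTconv : Convex ℝ T := by
    intro p hp q hq a b ha hb hab
    have hb' : b = 1 - a := by linarith
    subst hb'
    obtain ⟨hpA, hpK⟩ := hp
    obtain ⟨hqA, hqK⟩ := hq
    have hxcomb : xb + (a • p + (1-a) • q).1 = a • (xb + p.1) + (1-a) • (xb + q.1) := by
      have h1 : (a • p + (1-a) • q).1 = a • p.1 + (1-a) • q.1 := rfl
      rw [h1]
      module
    have h2 : (a • p + (1-a) • q).2 = a • p.2 + (1-a) • q.2 := rfl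
    refine ⟨?_, ?_⟩
    · rw [hxcomb]
      exact hAconvex hpA hqA ha hb (by linarith)
    · rw [hxcomb, h2]
      have hdecomp : a • p.2 + (1-a) • q.2 -
            (Φ (a • (xb + p.1) + (1-a) • (xb + q.1)) - Ψ xs
              - DΨ xs (a • (xb + p.1) + (1-a) • (xb + q.1) - xs))
          = a • (p.2 - (Φ (xb + p.1) - Ψ xs - DΨ xs (xb + p.1 - xs)))
            + (1-a) • (q.2 - (Φ (xb + q.1) - Ψ xs - DΨ xs (xb + q.1 - xs)))
            + (a • (Φ (xb + p.1) - Ψ xs - DΨ xs (xb + p.1 - xs))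
               + (1-a) • (Φ (xb + q.1) - Ψ xs - DΨ xs (xb + q.1 - xs))
               - (Φ (a • (xb + p.1) + (1-a) • (xb + q.1)) - Ψ xs
                  - DΨ xs (a • (xb + p.1) + (1-a) • (xb + q.1) - xs))) := by
        module
      rw [hdecomp]
      exact Kadd _ (Kadd _ (hKcone a ha _ hpK) _ (hKcone (1-a) hb _ hqK)) _
        (hkeyconv _ _ a ha (by linarith))
  -- closedness of T
  have hS1 : IsClosed {p : X × Y | xb + p.1 ∈ A} :=
    hAclosed.preimage (by fun_prop : Continuous fun p : X × Y => xb + p.1)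
  have hgc : ContinuousOn (fun p : X × Y =>
      p.2 - (Φ (xb + p.1) - Ψ xs - DΨ xs (xb + p.1 - xs))) {p : X × Y | xb + p.1 ∈ A} := by
    apply ContinuousOn.sub continuous_snd.continuousOn
    apply ContinuousOn.sub
    apply ContinuousOn.sub
    · exact hΦcont.comp
        (Continuous.continuousOn (by fun_prop : Continuous fun p : X × Y => xb + p.1))
        (fun p hp => hp)
    · exact continuousOn_const
    · exact ((DΨ xs).continuous.comp
        (by fun_prop : Continuous fun p : X × Y => xb + p.1 - xs)).continuousOn
  have hTcl : IsClosed T := by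
    have hcl := hgc.preimage_isClosed_of_isClosed hS1 hKclosed
    have : T = {p : X × Y | xb + p.1 ∈ A} ∩
        ((fun p : X × Y => p.2 - (Φ (xb + p.1) - Ψ xs - DΨ xs (xb + p.1 - xs))) ⁻¹' K) := by
      ext p
      simp only [hT, mem_setOf_eq, mem_inter_iff, mem_preimage]
    rwa [this]
  -- constraint qualification for T
  have hintT : (0:Y) ∈ interior {y : Y | ∃ x, (x, y) ∈ T} := by
    refine interior_mono ?_ hCQ
    rintro v ⟨x, hxA, hxK⟩
    refine ⟨x - xb, ?_⟩
    have hxx : xb + (x - xb) = x := by abel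
    simp only [hT, mem_setOf_eq, hxx]
    exact ⟨hxA, hxK⟩
  obtain ⟨ρ, hρ, r, hr, hclo⟩ := baire_step' T hTconv hintT
  set C : ℝ := 6*ρ/r with hCdef
  have hC : 0 < C := by positivity
  -- perturbation terms
  set L : X → X →L[ℝ] Y := fun z => DΨ xs - DΨ z with hL
  set cc : X → Y := fun z => (Ψ xs - Ψ z) + (DΨ z z - DΨ xs xs) with hcc
  set η : X → ℝ := fun z => ‖cc z + L z xb‖ with hη
  have hid : ∀ z x : X, (Φ x - Ψ xs - DΨ xs (x - xs)) + (cc z + L z x)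
      = Φ x - Ψ z - DΨ z (x - z) := by
    intro z x
    simp only [hL, hcc, ContinuousLinearMap.sub_apply, map_sub]
    abel
  -- continuity facts
  have hid' : Tendsto (fun z : X => z) (nhdsWithin xs A) (nhds xs) :=
    tendsto_id.mono_left nhdsWithin_le_nhds
  have hDc : Tendsto DΨ (nhdsWithin xs A) (nhds (DΨ xs)) := hDΨcont xs hxs
  have hΨc : Tendsto Ψ (nhdsWithin xs A) (nhds (Ψ xs)) :=
    ((hΨdiff xs hxs).continuousAt).continuousWithinAt
  have happly : Continuous fun q : (X →L[ℝ] Y) × X => q.1 q.2 :=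
    isBoundedBilinearMap_apply.continuous
  have happ : Tendsto (fun z => DΨ z z) (nhdsWithin xs A) (nhds (DΨ xs xs)) :=
    (happly.tendsto (DΨ xs, xs)).comp (hDc.prodMk_nhds hid')
  have hccT : Tendsto cc (nhdsWithin xs A) (nhds 0) := by
    have h1 : Tendsto (fun z => Ψ xs - Ψ z) (nhdsWithin xs A) (nhds (Ψ xs - Ψ xs)) :=
      tendsto_const_nhds.sub hΨc
    have h2 : Tendsto (fun z => DΨ z z - DΨ xs xs) (nhdsWithin xs A)
        (nhds (DΨ xs xs - DΨ xs xs)) := happ.sub tendsto_const_nhds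
    have h3 := h1.add h2
    simpa [hcc] using h3
  have hLb : Tendsto (fun z => L z xb) (nhdsWithin xs A) (nhds 0) := by
    have h1 : Tendsto (fun z => DΨ z xb) (nhdsWithin xs A) (nhds (DΨ xs xb)) :=
      (happly.tendsto (DΨ xs, xb)).comp (hDc.prodMk_nhds tendsto_const_nhds)
    have h2 : Tendsto (fun z => DΨ xs xb - DΨ z xb) (nhdsWithin xs A)
        (nhds (DΨ xs xb - DΨ xs xb)) := tendsto_const_nhds.sub h1
    simp only [hL, ContinuousLinearMap.sub_apply]
    simpa using h2
  have hηt : Tendsto η (nhdsWithin xs A) (nhds 0) := by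
    have := (hccT.add hLb).norm
    simpa [hη] using this
  have hLn : Tendsto (fun z => ‖L z‖) (nhdsWithin xs A) (nhds 0) := by
    have h1 : Tendsto (fun z => DΨ xs - DΨ z) (nhdsWithin xs A)
        (nhds (DΨ xs - DΨ xs)) := tendsto_const_nhds.sub hDc
    simp only [hL]
    simpa using h1.norm
  -- the neighbourhood
  have hcond : ∀ᶠ z in nhdsWithin xs A,
      ‖L z‖ < 1/(2*C) ∧ η z < min (r/24) (ρ/(2*C)) := by
    have h1 := hLn.eventually_lt_const (by positivity : (0:ℝ) < 1/(2*C))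
    have h2 := hηt.eventually_lt_const (by positivity : (0:ℝ) < min (r/24) (ρ/(2*C)))
    exact h1.and h2
  obtain ⟨U, hUopen, hxsU, hUsub⟩ := mem_nhdsWithin.mp hcond
  -- main construction per z
  have main : ∀ z ∈ U ∩ A, ∃ u : X,
      (xb + u ∈ A ∧ -(Φ (xb + u) - Ψ z - DΨ z (xb + u - z)) ∈ K) ∧ ‖u‖ ≤ 2*C*η z := by
    intro z hz
    obtain ⟨hLz, hηz⟩ := hUsub hz
    have hηz1 : η z ≤ r/24 := le_of_lt (lt_of_lt_of_le hηz (min_le_left _ _))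
    have hηz2 : η z ≤ ρ/(2*C) := le_of_lt (lt_of_lt_of_le hηz (min_le_right _ _))
    have hη0 : (0:ℝ) ≤ η z := norm_nonneg _
    obtain ⟨f, hf0, hfP, hfR⟩ := dc_seq'
      (fun n p => p ∈ T ∧ ‖p.1‖ ≤ (2 - 2*(1/2)^n) * (C * η z) ∧
        ‖p.2‖ ≤ (2 - 2*(1/2)^n) * η z ∧
        ‖p.2 + (cc z + L z (xb + p.1))‖ ≤ (1/2)^n * η z)
      (fun n p q => ‖q.1 - p.1‖ ≤ C * η z * (1/2)^n)
      ((0:X), (0:Y))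
      (by
        refine ⟨⟨by simpa using hxb, by simpa using hxbfeas⟩, by simp, by simp, ?_⟩
        simp only [pow_zero, one_mul, zero_add, add_zero, hη]
        exact le_refl _)
      (by
        intro n p hp
        obtain ⟨hpT, hp1, hp2, hp3⟩ := hp
        have hpow1 : ((1:ℝ)/2)^n ≤ 1 := pow_le_one₀ (by norm_num) (by norm_num)
        have hpow0 : (0:ℝ) < (1/2)^n := by positivity
        have hyp2 : ‖-(cc z + L z (xb + p.1)) - p.2‖ ≤ (1/2)^n * η z := by
          have he : -(cc z + L z (xb + p.1)) - p.2 = -(p.2 + (cc z + L z (xb + p.1))) := by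
            abel
          rw [he, norm_neg]
          exact hp3
        have hynorm : ‖-(cc z + L z (xb + p.1))‖ ≤ (2 - 2*(1/2)^(n+1)) * η z := by
          have h1 : ‖-(cc z + L z (xb + p.1))‖
              ≤ ‖-(cc z + L z (xb + p.1)) - p.2‖ + ‖p.2‖ := by
            simpa using norm_add_le (-(cc z + L z (xb + p.1)) - p.2) p.2
          have : (1/2)^n * η z + (2 - 2*(1/2)^n) * η z = (2 - (1/2)^n) * η z := by ring
          have h2 : (2 - (1/2:ℝ)^n) * η z = (2 - 2*(1/2)^(n+1)) * η z := by ring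
          linarith
        obtain ⟨x, hxT, hxd⟩ := lemR' T hTcl hTconv ρ r hρ hr hclo p.1 p.2
          (by simpa using hpT)
          (by
            have h1 : (2 - 2*(1/2:ℝ)^n) * (C * η z) ≤ 2 * (C * η z) := by
              nlinarith [mul_nonneg hpow0.le (mul_nonneg hC.le hη0)]
            have h2 : 2 * (C * η z) ≤ ρ := by
              have := mul_le_mul_of_nonneg_left hηz2 (by linarith : (0:ℝ) ≤ 2*C)
              calc 2 * (C * η z) = (2*C) * η z := by ring
                _ ≤ (2*C) * (ρ/(2*C)) := by
                    exact mul_le_mul_of_nonneg_left hηz2 (by positivity)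
                _ = ρ := by field_simp
            linarith)
          (by
            have h1 : (2 - 2*(1/2:ℝ)^n) * η z ≤ 2 * η z := by
              nlinarith [mul_nonneg hpow0.le hη0]
            linarith [hp2, mul_le_mul_of_nonneg_left hηz1 (by norm_num : (0:ℝ) ≤ 2)])
          (-(cc z + L z (xb + p.1)))
          (by
            have h2 : (2 - 2*(1/2:ℝ)^(n+1)) * η z ≤ 2 * η z := by
              have : (0:ℝ) < (1/2)^(n+1) := by positivity
              nlinarith
            linarith [mul_le_mul_of_nonneg_left hηz1 (by norm_num : (0:ℝ) ≤ 2)])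
        have hxd' : ‖x - p.1‖ ≤ C * η z * (1/2)^n := by
          calc ‖x - p.1‖ ≤ C * ‖-(cc z + L z (xb + p.1)) - p.2‖ := hxd
            _ ≤ C * ((1/2)^n * η z) := mul_le_mul_of_nonneg_left hyp2 hC.le
            _ = C * η z * (1/2)^n := by ring
        refine ⟨(x, -(cc z + L z (xb + p.1))), ⟨hxT, ?_, hynorm, ?_⟩, hxd'⟩
        · have h1 : ‖x‖ ≤ ‖p.1‖ + ‖x - p.1‖ := by
            have hx : x = p.1 + (x - p.1) := by abel
            calc ‖x‖ = ‖p.1 + (x - p.1)‖ := by rw [← hx]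
              _ ≤ ‖p.1‖ + ‖x - p.1‖ := norm_add_le _ _
          calc ‖x‖ ≤ ‖p.1‖ + ‖x - p.1‖ := h1
            _ ≤ (2 - 2*(1/2)^n) * (C * η z) + C * η z * (1/2)^n := by linarith
            _ = (2 - 2*(1/2)^(n+1)) * (C * η z) := by ring
        · have he : -(cc z + L z (xb + p.1)) + (cc z + L z (xb + x))
              = L z (xb + x) - L z (xb + p.1) := by abel
          rw [he, ← map_sub, (by abel : (xb + x) - (xb + p.1) = x - p.1)]
          calc ‖L z (x - p.1)‖ ≤ ‖L z‖ * ‖x - p.1‖ := (L z).le_opNorm _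
            _ ≤ (1/(2*C)) * (C * η z * (1/2)^n) := by
                apply mul_le_mul hLz.le hxd' (norm_nonneg _) (by positivity)
            _ = (1/2)^(n+1) * η z := by field_simp; ring)
    -- limit
    have hcauchy : CauchySeq (fun n => (f n).1) := by
      apply cauchySeq_of_le_geometric (1/2) (C * η z) (by norm_num)
      intro n
      rw [dist_eq_norm, norm_sub_rev]
      exact hfR n
    obtain ⟨u, hu⟩ := cauchySeq_tendsto_of_complete hcauchy
    have hun : ‖u‖ ≤ 2*C*η z := by
      have hb : ∀ n, ‖(f n).1‖ ≤ 2*C*η z := by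
        intro n
        have h1 := (hfP n).2.1
        have hpow0 : (0:ℝ) < (1/2)^n := by positivity
        nlinarith [mul_nonneg hpow0.le (mul_nonneg hC.le hη0), mul_nonneg hC.le hη0]
      exact le_of_tendsto hu.norm (Eventually.of_forall hb)
    have h1 : Tendsto (fun n => (f n).2 + (cc z + L z (xb + (f n).1))) atTop (nhds 0) := by
      apply squeeze_zero_norm (fun n => (hfP n).2.2.2)
      have := tendsto_pow_atTop_nhds_zero_of_lt_one (by norm_num : (0:ℝ) ≤ 1/2)
        (by norm_num : (1:ℝ)/2 < 1)
      simpa using this.mul_const (η z)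
    have h2 : Tendsto (fun n => cc z + L z (xb + (f n).1)) atTop
        (nhds (cc z + L z (xb + u))) := by
      apply tendsto_const_nhds.add
      exact ((L z).continuous.tendsto _).comp (tendsto_const_nhds.add hu)
    have hsnd : Tendsto (fun n => (f n).2) atTop (nhds (-(cc z + L z (xb + u)))) := by
      have := h1.sub h2
      simpa using this
    have hmemT : (u, -(cc z + L z (xb + u))) ∈ T := by
      have htend : Tendsto f atTop (nhds (u, -(cc z + L z (xb + u)))) := by
        rw [Prod.tendsto_iff]
        exact ⟨hu, hsnd⟩
      exact hTcl.mem_of_tendsto htend (Eventually.of_forall fun n => (hfP n).1)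
    obtain ⟨huA, huK⟩ := hmemT
    refine ⟨u, ⟨huA, ?_⟩, hun⟩
    have heq : -(cc z + L z (xb + u)) - (Φ (xb + u) - Ψ xs - DΨ xs (xb + u - xs))
        = -(Φ (xb + u) - Ψ z - DΨ z (xb + u - z)) := by
      rw [← hid z (xb + u)]
      abel
    rwa [heq] at huK
  choose! uu huu1 huu2 using main
  refine ⟨U, hUopen.mem_nhds hxsU, fun z => xb + uu z, ?_, ?_, ?_⟩
  · intro z hz
    exact huu1 z hz
  · have hxsm : xs ∈ U ∩ A := ⟨hxsU, hxs⟩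
    have hη0 : η xs = 0 := by
      simp [hη, hcc, hL]
    have := huu2 xs hxsm
    rw [hη0] at this
    have : uu xs = 0 := by
      rw [← norm_le_zero_iff]
      linarith [this]
    simp [this]
  · have hUA : U ∩ A ∈ nhdsWithin xs A :=
      inter_mem (nhdsWithin_le_nhds (hUopen.mem_nhds hxsU)) self_mem_nhdsWithin
    have hev : ∀ᶠ z in nhdsWithin xs A, ‖uu z‖ ≤ 2*C*η z := by
      filter_upwards [hUA] with z hz
      exact huu2 z hz
    have hu0 : Tendsto uu (nhdsWithin xs A) (nhds 0) := by
      apply squeeze_zero_norm' hev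
      have := hηt.const_mul (2*C)
      simpa using this
    have hfin : Tendsto (fun z => xb + uu z) (nhdsWithin xs A) (nhds (xb + 0)) :=
      tendsto_const_nhds.add hu0
    simpa using hfin
end

section
/- Let x* be a locally optimal solution of the problem (P) and suppose the function H is Fréchet differentiable at x*. Then for every v ∈ ∂h₀(x*), the point x* is a globally optimal solution of the convex program: minimize g₀(x) − h₀(x*) − ⟨v, x − x*⟩ subject to G(x) − H(x*) − DH(x*)(x − x*) ⪯_K 0 and x ∈ A. -/
open scoped RealInnerProductSpace Pointwise

/-- The subdifferential of a convex function `φ : ℝ^d → ℝ` at a point `x`. -/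
def subdiff {d : ℕ} (φ : EuclideanSpace ℝ (Fin d) → ℝ) (x : EuclideanSpace ℝ (Fin d)) :
    Set (EuclideanSpace ℝ (Fin d)) :=
  {w | ∀ y, φ x + ⟪w, y - x⟫ ≤ φ y}

/-! Every point `x` feasible for the convexified constraint is feasible for `(P)`, because the
linearization of the `K`-convex `H` at `x*` lies `K`-below `H`. On this convex set the convex
surrogate `g₀ x - h₀ x* - ⟪v, x - x*⟫` majorizes `f₀` (as `v ∈ ∂h₀(x*)`) and agrees with it at
`x*`, so `x*` is a local minimizer of the surrogate there, hence a global one. -/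

section ConeOrder

variable {E Y : Type*} [AddCommGroup Y] [Module ℝ Y] {K : Set Y}

theorem add_mem_of_convex_of_smul_mem (hKconvex : Convex ℝ K)
    (hKcone : ∀ c : ℝ, 0 ≤ c → ∀ y ∈ K, c • y ∈ K) {a b : Y} (ha : a ∈ K) (hb : b ∈ K) :
    a + b ∈ K := by
  have hmid := hKconvex ha hb (by norm_num : (0 : ℝ) ≤ 1 / 2) (by norm_num : (0 : ℝ) ≤ 1 / 2)
    (by norm_num)
  convert hKcone 2 (by norm_num) _ hmid using 1
  module

theorem KConvex.sub_const_sub_linearMap [AddCommGroup E] [Module ℝ E] {Φ : E → Y}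
    (hΦ : KConvex K Φ) (c : Y) (L : E →ₗ[ℝ] Y) (x₀ : E) :
    KConvex K (fun x => Φ x - c - L (x - x₀)) := by
  intro x₁ x₂ α hα
  convert hΦ x₁ x₂ α hα using 1
  simp only [map_sub, map_add, map_smul]
  module

theorem KConvex.convex_setOf_neg_mem [AddCommGroup E] [Module ℝ E] {Φ : E → Y}
    (hKconvex : Convex ℝ K) (hKcone : ∀ c : ℝ, 0 ≤ c → ∀ y ∈ K, c • y ∈ K)
    (hΦ : KConvex K Φ) : Convex ℝ {x | -Φ x ∈ K} := by
  intro x₁ hx₁ x₂ hx₂ a b ha hb hab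
  obtain rfl : b = 1 - a := by linarith
  rw [Set.mem_ofPred_eq]
  have hgap := hΦ x₁ x₂ a ⟨ha, by linarith⟩
  have hsum := add_mem_of_convex_of_smul_mem hKconvex hKcone hgap
    (add_mem_of_convex_of_smul_mem hKconvex hKcone (hKcone a ha _ hx₁) (hKcone _ hb _ hx₂))
  convert hsum using 1
  module

end ConeOrder

/-- `H z - H x₀ - DH (z - x₀)` is the limit as `α → 0⁺` of
`α⁻¹ • (α • H z + (1 - α) • H x₀ - H (x₀ + α • (z - x₀))) ∈ K`, and `K` is closed. -/
theorem KConvex.sub_sub_fderiv_mem {E Y : Type*} [NormedAddCommGroup E] [NormedSpace ℝ E]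
    [NormedAddCommGroup Y] [NormedSpace ℝ Y] {K : Set Y} (hKclosed : IsClosed K)
    (hKcone : ∀ c : ℝ, 0 ≤ c → ∀ y ∈ K, c • y ∈ K) {H : E → Y} (hH : KConvex K H)
    {x₀ : E} {DH : E →L[ℝ] Y} (hDH : HasFDerivAt H DH x₀) (z : E) :
    H z - H x₀ - DH (z - x₀) ∈ K := by
  set u := z - x₀
  have hline : HasDerivAt (fun t : ℝ => x₀ + t • u) u 0 := by
    simpa using ((hasDerivAt_id (0 : ℝ)).smul_const u).const_add x₀
  have hDH' : HasFDerivAt H DH ((fun t : ℝ => x₀ + t • u) 0) := by simpa using hDH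
  have hslope := hasDerivAt_iff_tendsto_slope.mp (hDH'.comp_hasDerivAt 0 hline)
  have hlim : Filter.Tendsto (fun α : ℝ => H z - H x₀ - slope (fun t => H (x₀ + t • u)) 0 α)
      (nhdsWithin 0 (Set.Ioi 0)) (nhds (H z - H x₀ - DH u)) :=
    tendsto_const_nhds.sub
      (hslope.mono_left (nhdsWithin_mono 0 fun _ hα => ne_of_gt hα))
  refine hKclosed.mem_of_tendsto hlim ?_
  filter_upwards [Ioo_mem_nhdsGT_of_mem (Set.mem_Ico.mpr ⟨le_rfl, one_pos⟩)] with α hα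
  have hgap := hH z x₀ α ⟨hα.1.le, hα.2.le⟩
  rw [show α • z + (1 - α) • x₀ = x₀ + α • u by module] at hgap
  convert hKcone α⁻¹ (inv_nonneg.mpr hα.1.le) _ hgap using 1
  simp only [slope, vsub_eq_sub, sub_zero, zero_smul, add_zero]
  match_scalars <;> field_simp [hα.1.ne']
  ring

theorem stmt_10_general {d : ℕ} {Y : Type*}
    [NormedAddCommGroup Y] [NormedSpace ℝ Y]
    (K : Set Y) (hKclosed : IsClosed K) (hKconvex : Convex ℝ K)
    (hKcone : ∀ c : ℝ, 0 ≤ c → ∀ y ∈ K, c • y ∈ K)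
    (g₀ h₀ : EuclideanSpace ℝ (Fin d) → ℝ)
    (hg₀ : ConvexOn ℝ Set.univ g₀)
    (G H : EuclideanSpace ℝ (Fin d) → Y)
    (hG : KConvex K G) (hH : KConvex K H)
    (A : Set (EuclideanSpace ℝ (Fin d))) (hAconvex : Convex ℝ A)
    (xs : EuclideanSpace ℝ (Fin d))
    (DH : EuclideanSpace ℝ (Fin d) →L[ℝ] Y) (hDH : HasFDerivAt H DH xs)
    (hxsfeas : xs ∈ A ∧ -(G xs - H xs) ∈ K)
    (hlocopt : ∃ U ∈ nhds xs, ∀ x ∈ U, x ∈ A → -(G x - H x) ∈ K →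
      g₀ xs - h₀ xs ≤ g₀ x - h₀ x) :
    ∀ v ∈ subdiff h₀ xs,
      (xs ∈ A ∧ -(G xs - H xs - DH (xs - xs)) ∈ K) ∧
      ∀ x, x ∈ A → -(G x - H xs - DH (x - xs)) ∈ K →
        g₀ xs - h₀ xs - ⟪v, xs - xs⟫ ≤ g₀ x - h₀ xs - ⟪v, x - xs⟫ := by
  intro v hv
  set S := A ∩ {x | -(G x - H xs - DH (x - xs)) ∈ K}
  set φ := fun x => g₀ x - h₀ xs - ⟪v, x - xs⟫
  have hxsS : xs ∈ S := ⟨hxsfeas.1, by simpa using hxsfeas.2⟩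
  have hSconvex : Convex ℝ S := hAconvex.inter <|
    (hG.sub_const_sub_linearMap (H xs) DH.toLinearMap xs).convex_setOf_neg_mem hKconvex hKcone
  have hφconvex : ConvexOn ℝ S φ := by
    refine (((hg₀.subset (Set.subset_univ S) hSconvex).sub
      ((innerₛₗ ℝ v).concaveOn hSconvex)).add_const (⟪v, xs⟫ - h₀ xs)).congr fun x _ => ?_
    simp only [φ, Pi.add_apply, Pi.sub_apply, innerₛₗ_apply_apply, inner_sub_right]
    ring
  have hSfeas : ∀ x ∈ S, -(G x - H x) ∈ K := fun x hx => by
    convert add_mem_of_convex_of_smul_mem hKconvex hKcone hx.2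
      (hH.sub_sub_fderiv_mem hKclosed hKcone hDH x) using 1
    abel
  have hlocmin : IsLocalMinOn φ S xs := by
    obtain ⟨U, hU, hopt⟩ := hlocopt
    filter_upwards [mem_nhdsWithin_of_mem_nhds hU, self_mem_nhdsWithin] with x hxU hxS
    have hf₀ := hopt x hxU hxS.1 (hSfeas x hxS)
    have hsub := hv x
    simp only [φ, sub_self, inner_zero_right]
    linarith
  exact ⟨hxsS, fun x hxA hx =>
    IsMinOn.of_isLocalMinOn_of_convexOn hxsS hlocmin hφconvex ⟨hxA, hx⟩⟩

theorem stmt_10 {d : ℕ} {Y : Type*}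
    [NormedAddCommGroup Y] [NormedSpace ℝ Y] [CompleteSpace Y]
    (K : Set Y) (hKclosed : IsClosed K) (hKconvex : Convex ℝ K)
    (hKcone : ∀ c : ℝ, 0 ≤ c → ∀ y ∈ K, c • y ∈ K)
    (hKpointed : K ∩ (-K) = {0})
    (g₀ h₀ : EuclideanSpace ℝ (Fin d) → ℝ)
    (hg₀ : ConvexOn ℝ Set.univ g₀) (hh₀ : ConvexOn ℝ Set.univ h₀)
    (G H : EuclideanSpace ℝ (Fin d) → Y)
    (hG : KConvex K G) (hH : KConvex K H)
    (A : Set (EuclideanSpace ℝ (Fin d))) (hAclosed : IsClosed A) (hAconvex : Convex ℝ A)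
    (xs : EuclideanSpace ℝ (Fin d))
    (DH : EuclideanSpace ℝ (Fin d) →L[ℝ] Y) (hDH : HasFDerivAt H DH xs)
    (hxsfeas : xs ∈ A ∧ -(G xs - H xs) ∈ K)
    (hlocopt : ∃ U ∈ nhds xs, ∀ x ∈ U, x ∈ A → -(G x - H x) ∈ K →
      g₀ xs - h₀ xs ≤ g₀ x - h₀ x) :
    ∀ v ∈ subdiff h₀ xs,
      (xs ∈ A ∧ -(G xs - H xs - DH (xs - xs)) ∈ K) ∧
      ∀ x, x ∈ A → -(G x - H xs - DH (x - xs)) ∈ K →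
        g₀ xs - h₀ xs - ⟪v, xs - xs⟫ ≤ g₀ x - h₀ xs - ⟪v, x - xs⟫ :=
  stmt_10_general K hKclosed hKconvex hKcone g₀ h₀ hg₀ G H hG hH A hAconvex xs DH hDH hxsfeas
    hlocopt
end

section
/- Let x* be a locally optimal solution of the problem (P), let G and H be Fréchet differentiable at x*, and suppose the constraint qualification 0 ∈ int{G(x) − H(x*) − DH(x*)(x − x*) + K : x ∈ A} holds. Then for any v ∈ ∂h₀(x*) there exists a multiplier λ* ∈ K* (the dual cone of K) such that ⟨λ*, F(x*)⟩ = 0 and v ∈ ∂g₀(x*) + ∇(x ↦ ⟨λ*, F(x)⟩)(x*) + N_A(x*), where ∇(x ↦ ⟨λ*, F(x)⟩)(x*) is the (Fréchet) derivative at x* of the real-valued function x ↦ ⟨λ*, F(x)⟩. -/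
open scoped RealInnerProductSpace Pointwise Topology
open Filter Set

lemma aux_slope {E F : Type*} [NormedAddCommGroup E] [NormedSpace ℝ E]
    [NormedAddCommGroup F] [NormedSpace ℝ F] {f : E → F} {f' : E →L[ℝ] F} {x : E}
    (h : HasFDerivAt f f' x) (u : E) :
    Tendsto (fun t : ℝ => t⁻¹ • (f (x + t • u) - f x)) (𝓝[>] (0:ℝ)) (𝓝 (f' u)) := by
  have hline : HasDerivAt (fun t : ℝ => x + t • u) u 0 := by
    simpa using ((hasDerivAt_id (0:ℝ)).smul_const u).const_add x
  have hcomp : HasDerivAt (fun t : ℝ => f (x + t • u)) (f' u) 0 := by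
    have h' : HasFDerivAt f f' ((fun t : ℝ => x + t • u) 0) := by simpa using h
    exact h'.comp_hasDerivAt 0 hline
  have h2 := (hasDerivAt_iff_tendsto_slope.mp hcomp).mono_left
    (nhdsWithin_mono 0 (fun t (ht : t ∈ Set.Ioi (0:ℝ)) => ne_of_gt ht))
  refine h2.congr (fun t => ?_)
  simp [slope_def_module]

lemma aux_dual {Y : Type*} [NormedAddCommGroup Y] [NormedSpace ℝ Y] {K : Set Y}
    (hcl : IsClosed K) (hconv : Convex ℝ K)
    (hcone : ∀ c : ℝ, 0 ≤ c → ∀ y ∈ K, c • y ∈ K) (h0 : (0:Y) ∈ K) {z : Y}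
    (h : ∀ lam : Y →L[ℝ] ℝ, (∀ k ∈ K, 0 ≤ lam k) → 0 ≤ lam z) : z ∈ K := by
  by_contra hz
  obtain ⟨f, u, hfK, hfz⟩ := geometric_hahn_banach_closed_point hconv hcl hz
  have hu : 0 < u := by simpa using hfK 0 h0
  have hfKnonpos : ∀ k ∈ K, f k ≤ 0 := by
    intro k hk
    by_contra hpos
    push_neg at hpos
    have hc : (0:ℝ) ≤ (u + 1) / f k := by positivity
    have := hfK _ (hcone _ hc k hk)
    rw [map_smul] at this
    simp only [smul_eq_mul, div_mul_cancel₀ _ (ne_of_gt hpos)] at this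
    linarith
  have := h (-f) (fun k hk => by simpa using hfKnonpos k hk)
  simp only [ContinuousLinearMap.neg_apply, Left.nonneg_neg_iff] at this
  linarith

lemma aux_baire {Y : Type*} [NormedAddCommGroup Y] [NormedSpace ℝ Y] [CompleteSpace Y]
    (S : ℕ → Set Y) (hclosed : ∀ n, IsClosed (S n)) (hconv : ∀ n, Convex ℝ (S n))
    (hmono : Monotone S) {ε : ℝ} (hε : 0 < ε)
    (hcover : ∀ y ∈ Metric.closedBall (0:Y) ε, ∃ n, y ∈ S n) :
    ∃ N, (0:Y) ∈ interior (S N) := by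
  set B := Metric.closedBall (0:Y) ε with hB
  have hBclosed : IsClosed B := Metric.isClosed_closedBall
  haveI : CompleteSpace B := hBclosed.completeSpace_coe
  haveI : Nonempty B := ⟨⟨0, Metric.mem_closedBall_self hε.le⟩⟩
  obtain ⟨N, hN⟩ := nonempty_interior_of_iUnion_of_closed
    (f := fun n => ((Subtype.val : B → Y) ⁻¹' S n))
    (fun n => (hclosed n).preimage continuous_subtype_val)
    (by
      ext ⟨y, hy⟩
      simpa using hcover y hy)
  obtain ⟨⟨y₀, hy₀B⟩, hy₀⟩ := hN
  rw [mem_interior_iff_mem_nhds, nhds_induced, Filter.mem_comap] at hy₀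
  obtain ⟨V, hV, hVsub⟩ := hy₀
  obtain ⟨δ, hδ, hball⟩ := Metric.mem_nhds_iff.mp hV
  have hsub : ∀ z, z ∈ Metric.ball y₀ δ → z ∈ B → z ∈ S N := by
    intro z h1 h2
    have hzV : (⟨z, h2⟩ : B) ∈ Subtype.val ⁻¹' V := hball h1
    exact hVsub hzV
  have hy₀norm : ‖y₀‖ ≤ ε := by
    simpa [B, Metric.mem_closedBall, dist_eq_norm] using hy₀B
  set t : ℝ := min (δ / (2 * ε + 2)) (1/2) with ht
  have htpos : 0 < t := lt_min (by positivity) (by norm_num)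
  have htle : t ≤ 1/2 := min_le_right _ _
  have htε : t * ε ≤ δ / 2 := by
    have h1 : t ≤ δ / (2 * ε + 2) := min_le_left _ _
    have : t * ε ≤ (δ / (2 * ε + 2)) * ε := by nlinarith
    calc t * ε ≤ (δ / (2 * ε + 2)) * ε := this
      _ ≤ δ / 2 := by
          rw [div_mul_eq_mul_div, div_le_div_iff₀ (by positivity) (by norm_num)]
          nlinarith
  set z : Y := (1 - t) • y₀ with hz
  have hzint : z ∈ interior (S N) := by
    rw [mem_interior]
    refine ⟨Metric.ball z (t * ε), fun w hw => ?_, Metric.isOpen_ball,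
      Metric.mem_ball_self (by positivity)⟩
    have hwz : ‖w - z‖ < t * ε := by simpa [dist_eq_norm] using hw
    have hzy : ‖z - y₀‖ ≤ t * ε := by
      have : z - y₀ = (-t) • y₀ := by rw [hz]; module
      rw [this, norm_smul]
      simp only [norm_neg, Real.norm_eq_abs, abs_of_pos htpos]
      exact mul_le_mul_of_nonneg_left hy₀norm htpos.le
    refine hsub w ?_ ?_
    · rw [Metric.mem_ball, dist_eq_norm]
      calc ‖w - y₀‖ ≤ ‖w - z‖ + ‖z - y₀‖ := norm_sub_le_norm_sub_add_norm_sub _ _ _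
        _ < t * ε + t * ε := by linarith
        _ ≤ δ := by linarith
    · rw [hB, Metric.mem_closedBall, dist_zero_right]
      have hznorm : ‖z‖ ≤ (1 - t) * ε := by
        rw [hz, norm_smul, Real.norm_eq_abs, abs_of_pos (by linarith)]
        nlinarith
      refine le_of_lt ?_
      calc ‖w‖ = ‖(w - z) + z‖ := by rw [sub_add_cancel]
        _ ≤ ‖w - z‖ + ‖z‖ := norm_add_le _ _
        _ < t * ε + (1 - t) * ε := by linarith
        _ = ε := by ring
  set s : ℝ := ε / (‖z‖ + 1) with hs
  have hspos : 0 < s := by positivity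
  have hsz : -s • z ∈ B := by
    rw [hB, Metric.mem_closedBall, dist_zero_right, norm_smul]
    simp only [norm_neg, Real.norm_eq_abs, abs_of_pos hspos]
    rw [hs, div_mul_eq_mul_div, div_le_iff₀ (by positivity)]
    nlinarith [norm_nonneg z]
  obtain ⟨m, hm⟩ := hcover _ hsz
  refine ⟨max N m, ?_⟩
  have hzint' : z ∈ interior (S (max N m)) := interior_mono (hmono (le_max_left _ _)) hzint
  have hm' : -s • z ∈ S (max N m) := hmono (le_max_right _ _) hm
  have h0eq : ∀ zz : Y, (0:Y) = (s / (1 + s)) • zz + (1 / (1 + s)) • (-s • zz) := by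
    intro zz
    rw [smul_smul, show (1 / (1 + s)) * (-s) = -(s / (1 + s)) by ring, neg_smul]
    simp
  rw [h0eq z]
  exact (hconv _).combo_interior_self_mem_interior hzint' hm'
    (by positivity) (by positivity)
    (by rw [← add_div, add_comm s 1]; exact div_self (by positivity : (0:ℝ) < 1 + s).ne')

set_option maxHeartbeats 2000000 in
theorem stmt_12 {d : ℕ} {Y : Type*}
    [NormedAddCommGroup Y] [NormedSpace ℝ Y] [CompleteSpace Y]
    (K : Set Y) (hKclosed : IsClosed K) (hKconvex : Convex ℝ K)
    (hKcone : ∀ c : ℝ, 0 ≤ c → ∀ y ∈ K, c • y ∈ K)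
    (hKpointed : K ∩ (-K) = {0})
    (g₀ h₀ : EuclideanSpace ℝ (Fin d) → ℝ)
    (hg₀ : ConvexOn ℝ Set.univ g₀) (hh₀ : ConvexOn ℝ Set.univ h₀)
    (G H : EuclideanSpace ℝ (Fin d) → Y)
    (hG : KConvex K G) (hH : KConvex K H)
    (A : Set (EuclideanSpace ℝ (Fin d))) (hAclosed : IsClosed A) (hAconvex : Convex ℝ A)
    (xs : EuclideanSpace ℝ (Fin d))
    (DG DH : EuclideanSpace ℝ (Fin d) →L[ℝ] Y)
    (hDG : HasFDerivAt G DG xs) (hDH : HasFDerivAt H DH xs)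
    (hxsfeas : xs ∈ A ∧ -(G xs - H xs) ∈ K)
    (hlocopt : ∃ U ∈ nhds xs, ∀ x ∈ U, x ∈ A → -(G x - H x) ∈ K →
      g₀ xs - h₀ xs ≤ g₀ x - h₀ x)
    (hCQ : (0 : Y) ∈ interior {y : Y | ∃ x ∈ A, y - (G x - H xs - DH (x - xs)) ∈ K}) :
    ∀ v ∈ subdiff h₀ xs, ∃ lam : Y →L[ℝ] ℝ,
      (∀ y ∈ K, 0 ≤ lam y) ∧ lam (G xs - H xs) = 0 ∧
      ∃ w : EuclideanSpace ℝ (Fin d),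
        HasGradientAt (fun x => lam (G x - H x)) w xs ∧
        v ∈ subdiff g₀ xs + {w} +
          {u : EuclideanSpace ℝ (Fin d) | ∀ z ∈ A, ⟪u, z - xs⟫ ≤ 0} := by
  obtain ⟨hxsA, hxsK⟩ := hxsfeas
  obtain ⟨U, hU, hUopt⟩ := hlocopt
  -- basic cone facts
  have h0K : (0:Y) ∈ K := by
    have h : (0:Y) ∈ K ∩ (-K) := by rw [hKpointed]; rfl
    exact h.1
  have hKadd : ∀ a ∈ K, ∀ b ∈ K, a + b ∈ K := by
    intro a ha b hb
    have hmid := hKconvex ha hb (by norm_num : (0:ℝ) ≤ 1/2) (by norm_num : (0:ℝ) ≤ 1/2)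
      (by norm_num)
    have h2 := hKcone 2 (by norm_num) _ hmid
    rwa [smul_add, smul_smul, smul_smul, show (2:ℝ) * (1/2) = 1 by norm_num, one_smul,
      one_smul] at h2
  -- the convexified constraint map
  set Gt : EuclideanSpace ℝ (Fin d) → Y := fun x => G x - H xs - DH (x - xs) with hGt
  have hGtxs : Gt xs = G xs - H xs := by simp [hGt]
  have hGtconv : ∀ (x₁ x₂ : EuclideanSpace ℝ (Fin d)) (α : ℝ), α ∈ Set.Icc (0:ℝ) 1 →
      α • Gt x₁ + (1-α) • Gt x₂ - Gt (α • x₁ + (1-α) • x₂) ∈ K := by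
    intro x₁ x₂ α hα
    have h := hG x₁ x₂ α hα
    have heq : α • Gt x₁ + (1-α) • Gt x₂ - Gt (α • x₁ + (1-α) • x₂)
        = α • G x₁ + (1-α) • G x₂ - G (α • x₁ + (1-α) • x₂) := by
      simp only [hGt]
      have hDHe : DH (α • x₁ + (1-α) • x₂ - xs)
          = α • DH (x₁ - xs) + (1-α) • DH (x₂ - xs) := by
        rw [← map_smul, ← map_smul, ← map_add]
        congr 1
        module
      rw [hDHe]
      module
    rw [heq]; exact h
  -- gradient inequality for H
  have hHineq : ∀ x : EuclideanSpace ℝ (Fin d), H x - H xs - DH (x - xs) ∈ K := by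
    intro x
    have hconst : Tendsto (fun _ : ℝ => H x - H xs) (𝓝[>] (0:ℝ)) (𝓝 (H x - H xs)) :=
      tendsto_const_nhds
    have htend : Tendsto (fun t:ℝ => H x - H xs - t⁻¹ • (H (xs + t • (x - xs)) - H xs))
        (𝓝[>] (0:ℝ)) (𝓝 (H x - H xs - DH (x - xs))) :=
      by exact hconst.sub (aux_slope (E := EuclideanSpace ℝ (Fin d)) (F := Y) hDH (x - xs))
    refine hKclosed.mem_of_tendsto htend ?_
    filter_upwards [Ioo_mem_nhdsGT (zero_lt_one)] with t ht
    have htne : t ≠ 0 := ht.1.ne'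
    have hmem := hH x xs t ⟨ht.1.le, ht.2.le⟩
    have h2 := hKcone t⁻¹ (inv_nonneg.mpr ht.1.le) _ hmem
    have harg : xs + t • (x - xs) = t • x + (1-t) • xs := by module
    have heq : H x - H xs - t⁻¹ • (H (xs + t • (x - xs)) - H xs)
        = t⁻¹ • (t • H x + (1-t) • H xs - H (t • x + (1-t) • xs)) := by
      rw [harg]
      match_scalars <;> field_simp <;> ring
    rw [heq]; exact h2
  have hfeasC : ∀ x ∈ A, -Gt x ∈ K → -(G x - H x) ∈ K := by
    intro x hxA hxC
    have h2 := hHineq x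
    have heq : -(G x - H x) = -Gt x + (H x - H xs - DH (x - xs)) := by
      simp only [hGt]; abel
    rw [heq]; exact hKadd _ hxC _ h2
  have hGtxsK : -Gt xs ∈ K := by rw [hGtxs]; exact hxsK
  -- now fix v
  intro v hv
  set φ : EuclideanSpace ℝ (Fin d) → ℝ := fun x => g₀ x - ⟪v, x - xs⟫ with hφ
  have hφconv : ∀ (x₁ x₂ : EuclideanSpace ℝ (Fin d)) (a b : ℝ), 0 ≤ a → 0 ≤ b → a + b = 1 →
      φ (a • x₁ + b • x₂) ≤ a * φ x₁ + b * φ x₂ := by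
    intro x₁ x₂ a b ha hb hab
    have hg := hg₀.2 (mem_univ x₁) (mem_univ x₂) ha hb hab
    have hin : ⟪v, (a • x₁ + b • x₂) - xs⟫ = a * ⟪v, x₁ - xs⟫ + b * ⟪v, x₂ - xs⟫ := by
      simp only [inner_sub_right, inner_add_right, real_inner_smul_right]
      linear_combination ((inner ℝ v xs : ℝ)) * hab
    simp only [hφ, smul_eq_mul] at hg ⊢
    rw [hin]
    linarith [hg]
  have hφcont : Continuous φ := by
    have hcv : ConvexOn ℝ univ φ :=
      ⟨convex_univ, fun x _ y _ a b ha hb hab => hφconv x y a b ha hb hab⟩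
    exact hcv.locallyLipschitz.continuous
  have hφxs : φ xs = g₀ xs := by simp [hφ]
  -- global optimality for the convexified problem
  have hglobal : ∀ x ∈ A, -Gt x ∈ K → φ xs ≤ φ x := by
    intro x hxA hxK
    obtain ⟨δu, hδu, hballU⟩ := Metric.mem_nhds_iff.mp hU
    by_cases hxx : x = xs
    · rw [hxx]
    set t : ℝ := min (1/2) (δu / (2 * (‖x - xs‖ + 1))) with htdef
    have ht0 : 0 < t := lt_min (by norm_num) (by positivity)
    have ht1 : t ≤ 1/2 := min_le_left _ _
    have htn : t * ‖x - xs‖ < δu := by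
      have h1 : t ≤ δu / (2 * (‖x - xs‖ + 1)) := min_le_right _ _
      have h2 : t * ‖x - xs‖ ≤ (δu / (2 * (‖x - xs‖ + 1))) * ‖x - xs‖ :=
        mul_le_mul_of_nonneg_right h1 (norm_nonneg _)
      have h3 : (δu / (2 * (‖x - xs‖ + 1))) * ‖x - xs‖ < δu := by
        rw [div_mul_eq_mul_div, div_lt_iff₀ (by positivity)]
        nlinarith [norm_nonneg (x - xs)]
      linarith
    set xt : EuclideanSpace ℝ (Fin d) := xs + t • (x - xs) with hxt
    have hxteq : xt = t • x + (1-t) • xs := by rw [hxt]; module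
    have hxtU : xt ∈ U := by
      apply hballU
      rw [Metric.mem_ball, dist_eq_norm]
      have : xt - xs = t • (x - xs) := by rw [hxt]; abel
      rw [this, norm_smul, Real.norm_eq_abs, abs_of_pos ht0]
      exact htn
    have hxtA : xt ∈ A := by
      rw [hxteq]
      exact hAconvex hxA hxsA ht0.le (by linarith) (by ring)
    have hxtC : -Gt xt ∈ K := by
      have hcomb := hGtconv x xs t ⟨ht0.le, by linarith⟩
      have h1 : t • (-Gt x) ∈ K := hKcone t ht0.le _ hxK
      have h2 : (1-t) • (-Gt xs) ∈ K := hKcone (1-t) (by linarith) _ hGtxsK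
      have heq : -Gt xt = (t • Gt x + (1-t) • Gt xs - Gt (t • x + (1-t) • xs))
          + (t • (-Gt x) + (1-t) • (-Gt xs)) := by
        rw [hxteq]; module
      rw [heq]
      exact hKadd _ hcomb _ (hKadd _ h1 _ h2)
    have hfeas : -(G xt - H xt) ∈ K := hfeasC xt hxtA hxtC
    have hopt := hUopt xt hxtU hxtA hfeas
    have hsub := hv xt
    have h1 : φ xs ≤ φ xt := by
      simp only [hφ, sub_self, inner_zero_right, sub_zero]
      linarith [hopt]
    have hconvt := hφconv x xs t (1-t) ht0.le (by linarith) (by ring)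
    rw [← hxteq] at hconvt
    have h2 : t * φ xs ≤ t * φ x := by linarith
    exact le_of_mul_le_mul_left h2 ht0
  -- convexity of lam ∘ G for dual cone elements
  have hlamGconv : ∀ (lam : Y →L[ℝ] ℝ), (∀ k ∈ K, 0 ≤ lam k) →
      ConvexOn ℝ univ (fun x => lam (G x)) := by
    intro lam hlam
    refine ⟨convex_univ, fun x _ y _ a b ha hb hab => ?_⟩
    have hb' : b = 1 - a := by linarith
    subst hb'
    have h := hlam _ (hG x y a ⟨ha, by linarith⟩)
    rw [map_sub, map_add, map_smul, map_smul] at h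
    simp only [smul_eq_mul] at h ⊢
    linarith
  have hlamGtcont : ∀ (lam : Y →L[ℝ] ℝ), (∀ k ∈ K, 0 ≤ lam k) →
      Continuous (fun x => lam (Gt x)) := by
    intro lam hlam
    have h1 : Continuous (fun x => lam (G x)) :=
      (hlamGconv lam hlam).locallyLipschitz.continuous
    have heq : (fun x => lam (Gt x))
        = fun x => lam (G x) - lam (H xs) - lam (DH (x - xs)) := by
      funext x; simp [hGt, map_sub]
    rw [heq]
    exact (h1.sub continuous_const).sub
      ((lam.continuous.comp DH.continuous).comp (continuous_id.sub continuous_const))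
  -- Baire argument
  set S : ℕ → Set Y := fun n => {y | ∃ x ∈ A ∩ Metric.closedBall (0:EuclideanSpace ℝ (Fin d)) n, y - Gt x ∈ K}
    with hS
  have hSmono : Monotone S := by
    intro n m hnm y hy
    obtain ⟨x, ⟨hxA, hxb⟩, hk⟩ := hy
    exact ⟨x, ⟨hxA, Metric.closedBall_subset_closedBall (Nat.cast_le.mpr hnm) hxb⟩, hk⟩
  have hSconv : ∀ n, Convex ℝ (S n) := by
    intro n
    rintro y₁ ⟨x₁, ⟨h₁A, h₁b⟩, h₁K⟩ y₂ ⟨x₂, ⟨h₂A, h₂b⟩, h₂K⟩ a b ha hb hab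
    have hb' : b = 1 - a := by linarith
    subst hb'
    refine ⟨a • x₁ + (1-a) • x₂,
      ⟨hAconvex h₁A h₂A ha (by linarith) (by ring),
       convex_closedBall (0:EuclideanSpace ℝ (Fin d)) n h₁b h₂b ha (by linarith) (by ring)⟩, ?_⟩
    have hcomb := hGtconv x₁ x₂ a ⟨ha, by linarith⟩
    have heq : (a • y₁ + (1-a) • y₂) - Gt (a • x₁ + (1-a) • x₂)
        = (a • Gt x₁ + (1-a) • Gt x₂ - Gt (a • x₁ + (1-a) • x₂))
          + (a • (y₁ - Gt x₁) + (1-a) • (y₂ - Gt x₂)) := by module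
    rw [heq]
    exact hKadd _ hcomb _ (hKadd _ (hKcone a ha _ h₁K) _ (hKcone _ (by linarith) _ h₂K))
  have hSclosed : ∀ n, IsClosed (S n) := by
    intro n
    refine isSeqClosed_iff_isClosed.mp ?_
    intro ys y hmem hlim
    choose xf hxf1 hxf2 using hmem
    have hcpt : IsCompact (A ∩ Metric.closedBall (0:EuclideanSpace ℝ (Fin d)) n) :=
      (isCompact_closedBall (0:EuclideanSpace ℝ (Fin d)) n).inter_left hAclosed
    obtain ⟨x, hxmem, ρ, hρmono, hρtend⟩ := hcpt.tendsto_subseq hxf1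
    refine ⟨x, hxmem, ?_⟩
    refine aux_dual hKclosed hKconvex hKcone h0K ?_
    intro lam hlam
    have hterm : ∀ j, 0 ≤ lam (ys (ρ j) - Gt (xf (ρ j))) := fun j => hlam _ (hxf2 _)
    have hcont : Tendsto (fun j => lam (ys (ρ j) - Gt (xf (ρ j)))) atTop
        (𝓝 (lam (y - Gt x))) := by
      have h1 : Tendsto (fun j => lam (ys (ρ j))) atTop (𝓝 (lam y)) :=
        (lam.continuous.tendsto y).comp (hlim.comp hρmono.tendsto_atTop)
      have h2 : Tendsto (fun j => lam (Gt (xf (ρ j)))) atTop (𝓝 (lam (Gt x))) :=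
        ((hlamGtcont lam hlam).tendsto x).comp hρtend
      simpa [map_sub] using h1.sub h2
    exact ge_of_tendsto hcont (Eventually.of_forall hterm)
  obtain ⟨ε, hε, hball⟩ := Metric.mem_nhds_iff.mp (mem_interior_iff_mem_nhds.mp hCQ)
  have hcover : ∀ y ∈ Metric.closedBall (0:Y) (ε/2), ∃ n, y ∈ S n := by
    intro y hy
    have hyD : y ∈ {y : Y | ∃ x ∈ A, y - (G x - H xs - DH (x - xs)) ∈ K} :=
      hball (Metric.closedBall_subset_ball (by linarith) hy)
    obtain ⟨x, hxA, hxK⟩ := hyD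
    refine ⟨⌈‖x‖⌉₊, x, ⟨hxA, ?_⟩, hxK⟩
    simpa [Metric.mem_closedBall, dist_zero_right] using Nat.le_ceil ‖x‖
  obtain ⟨N, hN⟩ := aux_baire S hSclosed hSconv hSmono (by positivity) hcover
  obtain ⟨δ, hδ, hδball⟩ := Metric.mem_nhds_iff.mp (mem_interior_iff_mem_nhds.mp hN)
  -- bound of φ on the ball of radius N
  obtain ⟨xmax, hxmaxmem, hxmax'⟩ := (isCompact_closedBall (0:EuclideanSpace ℝ (Fin d)) N).exists_isMaxOn
    ⟨0, Metric.mem_closedBall_self (Nat.cast_nonneg N)⟩ hφcont.continuousOn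
  have hxmax : ∀ x ∈ Metric.closedBall (0:EuclideanSpace ℝ (Fin d)) N, φ x ≤ φ xmax :=
    fun x hx => hxmax' hx
  set R : ℝ := φ xmax - φ xs + 1 with hR
  -- the set EE and the separation
  set EE : Set (Y × ℝ) := {p | ∃ x ∈ A, p.1 - Gt x ∈ K ∧ φ x - φ xs ≤ p.2} with hEE
  have hEEconv : Convex ℝ EE := by
    rintro ⟨y₁, r₁⟩ ⟨x₁, h₁A, h₁K, h₁φ⟩ ⟨y₂, r₂⟩ ⟨x₂, h₂A, h₂K, h₂φ⟩ a b ha hb hab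
    have hb' : b = 1 - a := by linarith
    subst hb'
    refine ⟨a • x₁ + (1-a) • x₂, hAconvex h₁A h₂A ha (by linarith) (by ring), ?_, ?_⟩
    · have hcomb := hGtconv x₁ x₂ a ⟨ha, by linarith⟩
      have heq : (a • (y₁, r₁) + (1-a) • (y₂, r₂) : Y × ℝ).1 - Gt (a • x₁ + (1-a) • x₂)
          = (a • Gt x₁ + (1-a) • Gt x₂ - Gt (a • x₁ + (1-a) • x₂))
            + (a • (y₁ - Gt x₁) + (1-a) • (y₂ - Gt x₂)) := by
        simp only [Prod.smul_mk, Prod.mk_add_mk]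
        module
      rw [heq]
      exact hKadd _ hcomb _
        (hKadd _ (hKcone a ha _ h₁K) _ (hKcone _ (by linarith) _ h₂K))
    · have hφc := hφconv x₁ x₂ a (1-a) ha (by linarith) (by ring)
      simp only [Prod.smul_mk, Prod.mk_add_mk, smul_eq_mul]
      have hm1 : a * (φ x₁ - φ xs) ≤ a * r₁ := mul_le_mul_of_nonneg_left h₁φ ha
      have hm2 : (1-a) * (φ x₂ - φ xs) ≤ (1-a) * r₂ :=
        mul_le_mul_of_nonneg_left h₂φ (by linarith)
      linarith [hφc]
  have hpt0 : (((0:Y), R) : Y × ℝ) ∈ interior EE := by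
    rw [mem_interior]
    refine ⟨(Metric.ball (0:Y) δ) ×ˢ Ioi (φ xmax - φ xs), ?_,
      (Metric.isOpen_ball).prod isOpen_Ioi,
      ⟨Metric.mem_ball_self hδ, by rw [hR]; exact mem_Ioi.mpr (by linarith)⟩⟩
    rintro ⟨y, r⟩ ⟨hy, hr⟩
    obtain ⟨x, ⟨hxA, hxb⟩, hk⟩ := hδball hy
    exact ⟨x, hxA, hk, le_of_lt (lt_of_le_of_lt (by linarith [hxmax x hxb]) hr)⟩
  have hEEP : ∀ r : ℝ, r < 0 → (((0:Y), r) : Y × ℝ) ∉ EE := by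
    rintro r hr ⟨x, hxA, hxK, hxφ⟩
    have hk : -Gt x ∈ K := by simpa using hxK
    have := hglobal x hxA hk
    simp only at hxφ
    linarith
  obtain ⟨Φ, u, hΦ₁, hΦ₂⟩ := geometric_hahn_banach_open (hEEconv.interior) isOpen_interior
    ((convex_singleton (0:Y)).prod (convex_Iio (0:ℝ)))
    (by
      rw [Set.disjoint_left]
      rintro ⟨y, r⟩ hpint ⟨hy0, hr⟩
      simp only [mem_singleton_iff] at hy0
      simp only [mem_Iio] at hr
      subst hy0
      exact hEEP r hr (interior_subset hpint))
  have hEEle : ∀ p ∈ EE, Φ p ≤ u := by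
    intro p hp
    have hseg : ∀ t : ℝ, t ∈ Ioo (0:ℝ) 1 → Φ (t • (((0:Y), R) : Y × ℝ) + (1-t) • p) < u :=
      fun t ht => hΦ₁ _ (hEEconv.combo_interior_self_mem_interior hpt0 hp ht.1
        (by linarith [ht.2]) (by ring))
    have hcnt : Continuous (fun t : ℝ => Φ (t • (((0:Y), R) : Y × ℝ) + (1-t) • p)) := by
      apply Φ.continuous.comp
      exact (continuous_id.smul continuous_const).add
        ((continuous_const.sub continuous_id).smul continuous_const)
    have htend : Tendsto (fun t : ℝ => Φ (t • (((0:Y), R) : Y × ℝ) + (1-t) • p))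
        (𝓝[>] (0:ℝ)) (𝓝 (Φ p)) := by
      have h0 := hcnt.tendsto 0
      simp only [zero_smul, zero_add, sub_zero, one_smul] at h0
      exact tendsto_nhdsWithin_of_tendsto_nhds h0
    refine le_of_tendsto htend ?_
    filter_upwards [Ioo_mem_nhdsGT (zero_lt_one)] with t ht
    exact (hseg t ht).le
  set lam0 : Y →L[ℝ] ℝ := Φ.comp (ContinuousLinearMap.inl ℝ Y ℝ) with hlam0
  set μ : ℝ := Φ ((0:Y), (1:ℝ)) with hμ
  have hsplit : ∀ (y : Y) (r : ℝ), Φ (y, r) = lam0 y + μ * r := by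
    intro y r
    have heq : ((y, r) : Y × ℝ) = ((y, (0:ℝ)) : Y × ℝ) + r • (((0:Y), (1:ℝ)) : Y × ℝ) := by
      simp [Prod.ext_iff]
    rw [heq, map_add, map_smul]
    simp [hlam0, hμ, smul_eq_mul, mul_comm]
  have h00EE : (((0:Y), (0:ℝ)) : Y × ℝ) ∈ EE := by
    refine ⟨xs, hxsA, ?_, by simp⟩
    have : ((0:Y), (0:ℝ)).1 - Gt xs = -(G xs - H xs) := by rw [hGtxs]; simp
    rw [this]; exact hxsK
  have hu0 : u = 0 := by
    have h1 : 0 ≤ u := by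
      have h := hEEle _ h00EE
      rwa [hsplit, map_zero, mul_zero, add_zero] at h
    have h2 : ∀ r : ℝ, r < 0 → u ≤ μ * r := by
      intro r hr
      have h := hΦ₂ ((0:Y), r) ⟨mem_singleton _, mem_Iio.mpr hr⟩
      rwa [hsplit, map_zero, zero_add] at h
    have h3 : u ≤ 0 := by
      have htd : Tendsto (fun r : ℝ => μ * r) (𝓝[<] (0:ℝ)) (𝓝 (0:ℝ)) := by
        have hcm : Continuous (fun r : ℝ => μ * r) := continuous_const.mul continuous_id
        have h4 := hcm.tendsto (0:ℝ)
        simp only [mul_zero] at h4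
        exact tendsto_nhdsWithin_of_tendsto_nhds h4
      refine ge_of_tendsto htd ?_
      filter_upwards [self_mem_nhdsWithin] with r hr
      exact h2 r hr
    linarith
  have hμneg : μ < 0 := by
    have hμnonpos : μ ≤ 0 := by
      have h := hΦ₂ ((0:Y), (-1:ℝ)) ⟨mem_singleton _, by norm_num⟩
      rw [hsplit, map_zero, zero_add, hu0] at h
      linarith
    rcases lt_or_eq_of_le hμnonpos with h | h
    · exact h
    exfalso
    have hμ0 : μ = 0 := h
    have hD : ∀ y ∈ Metric.ball (0:Y) ε, lam0 y ≤ 0 := by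
      intro y hy
      obtain ⟨x, hxA, hxK⟩ := hball hy
      have hmem : ((y, φ x - φ xs) : Y × ℝ) ∈ EE := ⟨x, hxA, hxK, le_refl _⟩
      have hle := hEEle _ hmem
      rw [hsplit, hμ0, zero_mul, add_zero, hu0] at hle
      exact hle
    have hlam00 : ∀ y : Y, lam0 y = 0 := by
      intro y
      rcases eq_or_ne y 0 with rfl | hy
      · simp
      have hny : 0 < ‖y‖ := norm_pos_iff.mpr hy
      set c : ℝ := ε / (2 * ‖y‖) with hc
      have hc0 : 0 < c := by positivity
      have hmem : ∀ z : Y, ‖z‖ = ε/2 → z ∈ Metric.ball (0:Y) ε := by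
        intro z hz
        rw [Metric.mem_ball, dist_zero_right, hz]
        linarith
      have hn1 : ‖c • y‖ = ε/2 := by
        rw [norm_smul, Real.norm_eq_abs, abs_of_pos hc0, hc]
        field_simp
      have h1 := hD (c • y) (hmem _ hn1)
      have h2 := hD (-(c • y)) (hmem _ (by rwa [norm_neg]))
      rw [map_smul, smul_eq_mul] at h1
      rw [map_neg, map_smul, smul_eq_mul] at h2
      nlinarith
    have hlt := hΦ₁ _ hpt0
    rw [hsplit, hlam00 0, hμ0, zero_mul, add_zero, hu0] at hlt
    exact lt_irrefl 0 hlt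
  set lam : Y →L[ℝ] ℝ := μ⁻¹ • lam0 with hlamdef
  have hlamval : ∀ y : Y, lam y = μ⁻¹ * lam0 y := fun y => rfl
  have hμinv : μ⁻¹ < 0 := inv_neg''.mpr hμneg
  have hlamK : ∀ k ∈ K, 0 ≤ lam k := by
    intro k hk
    have hmem : ((k, (0:ℝ)) : Y × ℝ) ∈ EE := by
      refine ⟨xs, hxsA, ?_, by simp⟩
      have heq : ((k, (0:ℝ)) : Y × ℝ).1 - Gt xs = k + -(G xs - H xs) := by
        rw [hGtxs]; abel
      rw [heq]; exact hKadd _ hk _ hxsK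
    have hle := hEEle _ hmem
    rw [hsplit, mul_zero, add_zero, hu0] at hle
    rw [hlamval]
    nlinarith
  have hkey : ∀ x ∈ A, φ xs ≤ φ x + lam (Gt x) := by
    intro x hxA
    have hmem : ((Gt x, φ x - φ xs) : Y × ℝ) ∈ EE := ⟨x, hxA, by simp [h0K], le_refl _⟩
    have h1 := hEEle _ hmem
    rw [hsplit, hu0] at h1
    rw [hlamval]
    have h2 := mul_le_mul_of_nonpos_left h1 hμinv.le
    rw [mul_zero, mul_add, ← mul_assoc, inv_mul_cancel₀ hμneg.ne] at h2
    nlinarith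
  have hcompl : lam (G xs - H xs) = 0 := by
    have h1 := hkey xs hxsA
    rw [hGtxs] at h1
    have h2 := hlamK _ hxsK
    rw [map_neg] at h2
    linarith
  -- the gradient w
  have hFDer : HasFDerivAt (fun x => lam (G x - H x)) (lam.comp (DG - DH)) xs := by
    exact lam.hasFDerivAt.comp xs (hDG.sub hDH)
  set w : EuclideanSpace ℝ (Fin d) := (InnerProductSpace.toDual ℝ (EuclideanSpace ℝ (Fin d))).symm (lam.comp (DG - DH)) with hw
  have hwgrad : HasGradientAt (fun x => lam (G x - H x)) w xs := by
    rw [hw]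
    exact (hasFDerivAt_iff_hasGradientAt).mp hFDer
  have hwinner : ∀ z : EuclideanSpace ℝ (Fin d), ⟪w, z⟫ = lam (DG z - DH z) := by
    intro z
    rw [hw, ← InnerProductSpace.toDual_apply_apply, LinearIsometryEquiv.apply_symm_apply]
    simp
  refine ⟨lam, hlamK, hcompl, w, hwgrad, ?_⟩
  -- the convex function ψ = g₀ + ρ minimized over A at xs
  set ρ : EuclideanSpace ℝ (Fin d) → ℝ := fun x => lam (Gt x) - ⟪v, x - xs⟫ with hρ
  set ψ : EuclideanSpace ℝ (Fin d) → ℝ := fun x => g₀ x + ρ x with hψ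
  have hψφ : ∀ x, ψ x = φ x + lam (Gt x) := by intro x; simp [hψ, hρ, hφ]; ring
  have hψmin : ∀ x ∈ A, ψ xs ≤ ψ x := by
    intro x hxA
    rw [hψφ, hψφ, hGtxs, hcompl, add_zero]
    exact hkey x hxA
  have hψconv : ConvexOn ℝ univ ψ := by
    refine ⟨convex_univ, fun x₁ _ x₂ _ a b ha hb hab => ?_⟩
    have hb' : b = 1 - a := by linarith
    subst hb'
    have h1 := hφconv x₁ x₂ a (1-a) ha (by linarith) (by ring)
    have h2 := hlamK _ (hGtconv x₁ x₂ a ⟨ha, by linarith⟩)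
    rw [map_sub, map_add, map_smul, map_smul] at h2
    simp only [smul_eq_mul] at h2 ⊢
    rw [hψφ, hψφ, hψφ]
    linarith
  have hψcont : Continuous ψ := hψconv.locallyLipschitz.continuous
  -- separation of the strict epigraph of ψ from A × {ψ xs}
  have hepiconv : Convex ℝ {p : EuclideanSpace ℝ (Fin d) × ℝ | ψ p.1 < p.2} := by
    rintro ⟨x₁, r₁⟩ h₁ ⟨x₂, r₂⟩ h₂ a b ha hb hab
    simp only [mem_setOf_eq] at h₁ h₂ ⊢
    have hb' : b = 1 - a := by linarith
    subst hb'
    have hc := hψconv.2 (mem_univ x₁) (mem_univ x₂) ha (show (0:ℝ) ≤ 1-a by linarith) (by ring)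
    simp only [smul_eq_mul, Prod.smul_mk, Prod.mk_add_mk] at hc ⊢
    rcases eq_or_lt_of_le ha with h0 | h0
    · rw [← h0] at hc ⊢
      simp only [zero_mul, zero_add, zero_smul, sub_zero, one_smul, one_mul] at hc ⊢
      linarith
    · have hs1 : a * ψ x₁ < a * r₁ := by exact (mul_lt_mul_iff_right₀ h0).mpr h₁
      have hs2 : (1-a) * ψ x₂ ≤ (1-a) * r₂ := mul_le_mul_of_nonneg_left h₂.le (by linarith)
      linarith
  have hepiopen : IsOpen {p : EuclideanSpace ℝ (Fin d) × ℝ | ψ p.1 < p.2} :=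
    isOpen_lt (hψcont.comp continuous_fst) continuous_snd
  obtain ⟨Φ₂, u₂, hΨ₁, hΨ₂⟩ := geometric_hahn_banach_open hepiconv hepiopen
    (hAconvex.prod (convex_singleton (ψ xs)))
    (by
      rw [Set.disjoint_left]
      rintro ⟨x, r⟩ hlt ⟨hxA2, hr⟩
      simp only [mem_setOf_eq] at hlt
      simp only [mem_singleton_iff] at hr
      subst hr
      exact absurd (hψmin x hxA2) (not_le.mpr hlt))
  set ℓ : EuclideanSpace ℝ (Fin d) →L[ℝ] ℝ :=
    Φ₂.comp (ContinuousLinearMap.inl ℝ (EuclideanSpace ℝ (Fin d)) ℝ) with hℓ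
  set μ₂ : ℝ := Φ₂ (0, 1) with hμ₂
  have hsplit₂ : ∀ (x : EuclideanSpace ℝ (Fin d)) (r : ℝ), Φ₂ (x, r) = ℓ x + μ₂ * r := by
    intro x r
    have heq : ((x, r) : EuclideanSpace ℝ (Fin d) × ℝ)
        = ((x, (0:ℝ)) : EuclideanSpace ℝ (Fin d) × ℝ)
          + r • (((0:EuclideanSpace ℝ (Fin d)), (1:ℝ)) : EuclideanSpace ℝ (Fin d) × ℝ) := by
      simp [Prod.ext_iff]
    rw [heq, map_add, map_smul]
    simp [hℓ, hμ₂, smul_eq_mul, mul_comm]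
  have hepile : ∀ x : EuclideanSpace ℝ (Fin d), ℓ x + μ₂ * ψ x ≤ u₂ := by
    intro x
    have hseq : ∀ s : ℝ, 0 < s → ℓ x + μ₂ * (ψ x + s) < u₂ := by
      intro s hs
      have h := hΨ₁ (x, ψ x + s) (by simp only [mem_setOf_eq]; linarith)
      rwa [hsplit₂] at h
    have hcm : Continuous (fun s : ℝ => ℓ x + μ₂ * (ψ x + s)) :=
      continuous_const.add (continuous_const.mul (continuous_const.add continuous_id))
    have htd : Tendsto (fun s : ℝ => ℓ x + μ₂ * (ψ x + s)) (𝓝[>] (0:ℝ))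
        (𝓝 (ℓ x + μ₂ * ψ x)) := by
      have h4 := hcm.tendsto (0:ℝ)
      simp only [add_zero] at h4
      exact tendsto_nhdsWithin_of_tendsto_nhds h4
    refine le_of_tendsto htd ?_
    filter_upwards [self_mem_nhdsWithin] with s hs
    exact (hseq s hs).le
  have hAle : ∀ z ∈ A, u₂ ≤ ℓ z + μ₂ * ψ xs := by
    intro z hz
    have h := hΨ₂ (z, ψ xs) ⟨hz, mem_singleton _⟩
    rwa [hsplit₂] at h
  have hμ₂neg : μ₂ < 0 := by
    have h1 := hΨ₁ (xs, ψ xs + 1) (by simp only [mem_setOf_eq]; linarith)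
    rw [hsplit₂] at h1
    have h2 := hAle xs hxsA
    nlinarith
  have hμ₂ne : (-μ₂) ≠ 0 := by linarith
  have hμ₂invpos : 0 < (-μ₂)⁻¹ := inv_pos.mpr (by linarith)
  set pv : EuclideanSpace ℝ (Fin d) :=
    (InnerProductSpace.toDual ℝ (EuclideanSpace ℝ (Fin d))).symm ℓ with hpv
  have hpvinner : ∀ z : EuclideanSpace ℝ (Fin d), ⟪pv, z⟫ = ℓ z := by
    intro z
    rw [hpv, ← InnerProductSpace.toDual_apply_apply, LinearIsometryEquiv.apply_symm_apply]
  set p' : EuclideanSpace ℝ (Fin d) := (-μ₂)⁻¹ • pv with hp'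
  have hp'inner : ∀ z : EuclideanSpace ℝ (Fin d), ⟪p', z⟫ = (-μ₂)⁻¹ * ℓ z := by
    intro z
    rw [hp', real_inner_smul_left, hpvinner]
  have hψsub : ∀ x : EuclideanSpace ℝ (Fin d), ψ xs + ⟪p', x - xs⟫ ≤ ψ x := by
    intro x
    have h3 : ℓ x + μ₂ * ψ x ≤ ℓ xs + μ₂ * ψ xs := le_trans (hepile x) (hAle xs hxsA)
    rw [hp'inner, map_sub]
    have h5 : ℓ x - ℓ xs ≤ (-μ₂) * (ψ x - ψ xs) := by nlinarith
    have h6 := mul_le_mul_of_nonneg_left h5 hμ₂invpos.le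
    rw [← mul_assoc, inv_mul_cancel₀ hμ₂ne, one_mul] at h6
    rw [mul_sub] at h6
    linarith
  have hnormal : ∀ z ∈ A, 0 ≤ ⟪p', z - xs⟫ := by
    intro z hz
    have h1 := hAle z hz
    have h2 := hepile xs
    rw [hp'inner, map_sub]
    have h7 : 0 ≤ ℓ z - ℓ xs := by linarith
    have := mul_le_mul_of_nonneg_left h7 hμ₂invpos.le
    rw [mul_zero] at this
    linarith [this]
  -- derivative of ρ at xs
  set Dρ : EuclideanSpace ℝ (Fin d) →L[ℝ] ℝ := lam.comp (DG - DH) - innerSL ℝ v with hDρ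
  have hρder : HasFDerivAt ρ Dρ xs := by
    have h1 : HasFDerivAt (fun x => lam (G x)) (lam.comp DG) xs := lam.hasFDerivAt.comp xs hDG
    have h3 : HasFDerivAt (fun x : EuclideanSpace ℝ (Fin d) => lam (DH (x - xs)))
        (lam.comp DH) xs := by
      have heq : (fun x : EuclideanSpace ℝ (Fin d) => lam (DH (x - xs)))
          = fun x => (lam.comp DH) x - lam (DH xs) := by
        funext x; simp [map_sub]
      rw [heq]
      exact (lam.comp DH).hasFDerivAt.sub_const _
    have h4 : HasFDerivAt (fun x : EuclideanSpace ℝ (Fin d) => (⟪v, x - xs⟫ : ℝ))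
        (innerSL ℝ v) xs := by
      have heq : (fun x : EuclideanSpace ℝ (Fin d) => (⟪v, x - xs⟫ : ℝ))
          = fun x => innerSL ℝ v x - ⟪v, xs⟫ := by
        funext x; simp [inner_sub_right]
      rw [heq]
      exact (innerSL ℝ v).hasFDerivAt.sub_const _
    have h5 : HasFDerivAt
        (fun x : EuclideanSpace ℝ (Fin d) =>
          lam (G x) - lam (H xs) - lam (DH (x - xs)) - ⟪v, x - xs⟫)
        (lam.comp DG - lam.comp DH - innerSL ℝ v) xs := ((h1.sub_const _).sub h3).sub h4
    have heqρ : ρ = fun x : EuclideanSpace ℝ (Fin d) =>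
        lam (G x) - lam (H xs) - lam (DH (x - xs)) - ⟪v, x - xs⟫ := by
      funext x; simp [hρ, hGt, map_sub]
    have heqD : Dρ = lam.comp DG - lam.comp DH - innerSL ℝ v := by
      rw [hDρ]
      ext z
      simp [map_sub]
    rw [heqρ, heqD]
    exact h5
  have hDρval : ∀ z : EuclideanSpace ℝ (Fin d), Dρ z = ⟪w - v, z⟫ := by
    intro z
    rw [hDρ]
    rw [inner_sub_left, hwinner z]
    simp [map_sub]
  -- p := p' + v - w is a subgradient of g₀ at xs
  set p : EuclideanSpace ℝ (Fin d) := p' + v - w with hp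
  have hpsub : p ∈ subdiff g₀ xs := by
    intro y
    have hlim : Tendsto (fun t : ℝ => ⟪p', y - xs⟫ - t⁻¹ * (ρ (xs + t • (y - xs)) - ρ xs))
        (𝓝[>] (0:ℝ)) (𝓝 (⟪p', y - xs⟫ - ⟪w - v, y - xs⟫)) := by
      have hsl := aux_slope (E := EuclideanSpace ℝ (Fin d)) (F := ℝ) hρder (y - xs)
      rw [hDρval] at hsl
      have hconst2 : Tendsto (fun _ : ℝ => (⟪p', y - xs⟫ : ℝ)) (𝓝[>] (0:ℝ))
          (𝓝 (⟪p', y - xs⟫ : ℝ)) := tendsto_const_nhds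
      exact hconst2.sub (by simpa [smul_eq_mul] using hsl)
    have hineq : ∀ t ∈ Ioo (0:ℝ) 1,
        ⟪p', y - xs⟫ - t⁻¹ * (ρ (xs + t • (y - xs)) - ρ xs) ≤ g₀ y - g₀ xs := by
      intro t ht
      have h1 := hψsub (xs + t • (y - xs))
      have harg : xs + t • (y - xs) - xs = t • (y - xs) := by abel
      rw [harg, real_inner_smul_right] at h1
      have hcomb : xs + t • (y - xs) = t • y + (1-t) • xs := by module
      have h2 : g₀ (xs + t • (y - xs)) ≤ t * g₀ y + (1-t) * g₀ xs := by
        rw [hcomb]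
        simpa [smul_eq_mul] using
          hg₀.2 (mem_univ y) (mem_univ xs) ht.1.le (show (0:ℝ) ≤ 1-t by linarith [ht.2])
            (by ring)
      have hψxt : ψ (xs + t • (y - xs)) = g₀ (xs + t • (y - xs)) + ρ (xs + t • (y - xs)) := rfl
      have hψxs2 : ψ xs = g₀ xs + ρ xs := rfl
      have h4 : t * ⟪p', y - xs⟫ - (ρ (xs + t • (y - xs)) - ρ xs) ≤ t * (g₀ y - g₀ xs) := by
        rw [hψxt, hψxs2] at h1
        nlinarith [h1, h2]
      have h5 := mul_le_mul_of_nonneg_left h4 (inv_nonneg.mpr ht.1.le)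
      rw [mul_sub, ← mul_assoc, ← mul_assoc, inv_mul_cancel₀ ht.1.ne', one_mul] at h5
      linarith
    have hfinal := le_of_tendsto hlim
      (by filter_upwards [Ioo_mem_nhdsGT (zero_lt_one)] with t ht using hineq t ht)
    have hpe : (⟪p, y - xs⟫:ℝ) = ⟪p', y - xs⟫ - ⟪w - v, y - xs⟫ := by
      rw [hp]
      simp only [inner_sub_left, inner_add_left]
      ring
    show g₀ xs + ⟪p, y - xs⟫ ≤ g₀ y
    rw [hpe]
    linarith
  have hn : (-p') ∈ {u : EuclideanSpace ℝ (Fin d) | ∀ z ∈ A, ⟪u, z - xs⟫ ≤ 0} := by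
    intro z hz
    rw [inner_neg_left]
    linarith [hnormal z hz]
  have hveq : v = (p + w) + (-p') := by rw [hp]; abel
  rw [hveq]
  exact Set.add_mem_add (Set.add_mem_add hpsub (Set.mem_singleton w)) hn
end

section
/- Let H be Gâteaux differentiable on ℝ^d, and let a sequence {x_n} be generated by the convex-concave procedure for problem (P): x₀ is feasible for (P), and for each n, v_n ∈ ∂h₀(x_n) and x_{n+1} is a globally optimal solution of the convex problem: minimize g₀(x) − ⟨v_n, x − x_n⟩ subject to G(x) − H(x_n) − DH(x_n)(x − x_n) ⪯_K 0 and x ∈ A. Then every x_n is feasible for (P) (in particular the feasible region of each convex subproblem is nonempty), f₀(x_{n+1}) ≤ f₀(x_n) for all n, and if f₀ is bounded below on the feasible region of (P), the sequence {f₀(x_n)} converges. -/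
/-!
Since `H` is `K`-convex, its Gâteaux derivative gives the gradient inequality
`H p + DH p (y - p) ⪯_K H y`, so the linearized constraint of each subproblem is an inner
approximation of `F y ⪯_K 0`: every iterate stays feasible for (P), and `x n` is feasible for
the `n`-th subproblem. Comparing `x (n + 1)` with `x n` in that subproblem and using the
subgradient inequality `h₀ (x n) + ⟪v n, y - x n⟫ ≤ h₀ y` gives the descent of `f₀`; a monotone
sequence bounded below converges.
-/

open scoped RealInnerProductSpace Pointwise

open Filter Topology

theorem add_mem_of_convex_of_smul_mem_s13 {Y : Type*} [AddCommGroup Y] [Module ℝ Y] {K : Set Y}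
    (hKconvex : Convex ℝ K) (hKcone : ∀ c : ℝ, 0 ≤ c → ∀ y ∈ K, c • y ∈ K)
    {y z : Y} (hy : y ∈ K) (hz : z ∈ K) : y + z ∈ K := by
  have hmid : (1 / 2 : ℝ) • y + (1 / 2 : ℝ) • z ∈ K :=
    hKconvex hy hz (by norm_num) (by norm_num) (by norm_num)
  convert hKcone 2 zero_le_two _ hmid using 1
  module

theorem KConvex.sub_sub_mem_of_tendsto {X Y : Type*} [AddCommGroup X] [Module ℝ X]
    [TopologicalSpace Y] [AddCommGroup Y] [Module ℝ Y] [ContinuousSub Y]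
    {K : Set Y} (hKclosed : IsClosed K) (hKcone : ∀ c : ℝ, 0 ≤ c → ∀ y ∈ K, c • y ∈ K)
    {H : X → Y} (hH : KConvex K H) {p u : X} {D : Y}
    (hD : Tendsto (fun t : ℝ => t⁻¹ • (H (p + t • u) - H p)) (𝓝[≠] 0) (𝓝 D)) :
    H (p + u) - H p - D ∈ K := by
  have hD' : Tendsto (fun t : ℝ => H (p + u) - H p - t⁻¹ • (H (p + t • u) - H p))
      (𝓝[>] 0) (𝓝 (H (p + u) - H p - D)) :=
    tendsto_const_nhds.sub (hD.mono_left (nhdsWithin_mono 0 fun _ ht => ne_of_gt ht))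
  refine hKclosed.mem_of_tendsto hD' ?_
  filter_upwards [Ioc_mem_nhdsGT_of_mem (Set.left_mem_Ico.mpr one_pos)] with t ht
  -- the chord inequality between `p` and `p + u` at parameter `t`, rescaled by `t⁻¹`
  have hchord := hKcone t⁻¹ (inv_nonneg.mpr ht.1.le) _ (hH (p + u) p t ⟨ht.1.le, ht.2⟩)
  have hpoint : t • (p + u) + (1 - t) • p = p + t • u := by module
  rw [hpoint] at hchord
  convert hchord using 1
  have ht0 : t ≠ 0 := ht.1.ne'
  match_scalars <;> field_simp
  ring

theorem sub_le_sub_of_mem_subdiff {d : ℕ} {g₀ h₀ : EuclideanSpace ℝ (Fin d) → ℝ}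
    {p q v : EuclideanSpace ℝ (Fin d)} (hv : v ∈ subdiff h₀ p)
    (hopt : g₀ q - ⟪v, q - p⟫ ≤ g₀ p - ⟪v, p - p⟫) :
    g₀ q - h₀ q ≤ g₀ p - h₀ p := by
  have hsub := hv q
  simp only [sub_self, inner_zero_right, sub_zero] at hopt
  linarith

theorem stmt_13_general {d : ℕ} {Y : Type*}
    [NormedAddCommGroup Y] [NormedSpace ℝ Y]
    (K : Set Y) (hKclosed : IsClosed K) (hKconvex : Convex ℝ K)
    (hKcone : ∀ c : ℝ, 0 ≤ c → ∀ y ∈ K, c • y ∈ K)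
    (g₀ h₀ : EuclideanSpace ℝ (Fin d) → ℝ)
    (G H : EuclideanSpace ℝ (Fin d) → Y)
    (hH : KConvex K H)
    (A : Set (EuclideanSpace ℝ (Fin d)))
    -- H is Gâteaux differentiable on ℝ^d with derivative DH
    (DH : EuclideanSpace ℝ (Fin d) → EuclideanSpace ℝ (Fin d) →L[ℝ] Y)
    (hGateaux : ∀ p u, Filter.Tendsto (fun t : ℝ => t⁻¹ • (H (p + t • u) - H p))
      (nhdsWithin 0 {(0 : ℝ)}ᶜ) (nhds (DH p u)))
    -- the sequence generated by the convex-concave procedure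
    (x : ℕ → EuclideanSpace ℝ (Fin d)) (v : ℕ → EuclideanSpace ℝ (Fin d))
    (hx0 : x 0 ∈ A ∧ -(G (x 0) - H (x 0)) ∈ K)
    (hv : ∀ n, v n ∈ subdiff h₀ (x n))
    (hsol : ∀ n, (x (n + 1) ∈ A ∧
        -(G (x (n + 1)) - H (x n) - DH (x n) (x (n + 1) - x n)) ∈ K) ∧
      ∀ y, y ∈ A → -(G y - H (x n) - DH (x n) (y - x n)) ∈ K →
        g₀ (x (n + 1)) - ⟪v n, x (n + 1) - x n⟫ ≤ g₀ y - ⟪v n, y - x n⟫) :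
    (∀ n, {y | y ∈ A ∧ -(G y - H (x n) - DH (x n) (y - x n)) ∈ K}.Nonempty) ∧
    (∀ n, x n ∈ A ∧ -(G (x n) - H (x n)) ∈ K) ∧
    (∀ n, g₀ (x (n + 1)) - h₀ (x (n + 1)) ≤ g₀ (x n) - h₀ (x n)) ∧
    ((∃ B : ℝ, ∀ y, y ∈ A → -(G y - H y) ∈ K → B ≤ g₀ y - h₀ y) →
      ∃ L : ℝ, Filter.Tendsto (fun n => g₀ (x n) - h₀ (x n)) Filter.atTop (nhds L)) := by
  have hfeas : ∀ n, x n ∈ A ∧ -(G (x n) - H (x n)) ∈ K := by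
    intro n
    induction n with
    | zero => exact hx0
    | succ n _ =>
      obtain ⟨hA, hlin⟩ := (hsol n).1
      have hgrad := hH.sub_sub_mem_of_tendsto hKclosed hKcone (hGateaux (x n) (x (n + 1) - x n))
      rw [add_sub_cancel] at hgrad
      refine ⟨hA, ?_⟩
      convert add_mem_of_convex_of_smul_mem_s13 hKconvex hKcone hlin hgrad using 1
      abel
  have hsubfeas : ∀ n, x n ∈ {y | y ∈ A ∧ -(G y - H (x n) - DH (x n) (y - x n)) ∈ K} := fun n =>
    ⟨(hfeas n).1, by simpa only [sub_self, map_zero, sub_zero] using (hfeas n).2⟩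
  have hdec : ∀ n, g₀ (x (n + 1)) - h₀ (x (n + 1)) ≤ g₀ (x n) - h₀ (x n) := fun n =>
    sub_le_sub_of_mem_subdiff (hv n) ((hsol n).2 (x n) (hsubfeas n).1 (hsubfeas n).2)
  refine ⟨fun n => ⟨x n, hsubfeas n⟩, hfeas, hdec, ?_⟩
  rintro ⟨B, hB⟩
  refine ⟨_, tendsto_atTop_ciInf (antitone_nat_of_succ_le hdec) ⟨B, ?_⟩⟩
  rintro _ ⟨n, rfl⟩
  exact hB (x n) (hfeas n).1 (hfeas n).2

theorem stmt_13 {d : ℕ} {Y : Type*}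
    [NormedAddCommGroup Y] [NormedSpace ℝ Y] [CompleteSpace Y]
    (K : Set Y) (hKclosed : IsClosed K) (hKconvex : Convex ℝ K)
    (hKcone : ∀ c : ℝ, 0 ≤ c → ∀ y ∈ K, c • y ∈ K)
    (hKpointed : K ∩ (-K) = {0})
    (g₀ h₀ : EuclideanSpace ℝ (Fin d) → ℝ)
    (hg₀ : ConvexOn ℝ Set.univ g₀) (hh₀ : ConvexOn ℝ Set.univ h₀)
    (G H : EuclideanSpace ℝ (Fin d) → Y)
    (hG : KConvex K G) (hH : KConvex K H)
    (A : Set (EuclideanSpace ℝ (Fin d))) (hAclosed : IsClosed A) (hAconvex : Convex ℝ A)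
    -- H is Gâteaux differentiable on ℝ^d with derivative DH
    (DH : EuclideanSpace ℝ (Fin d) → EuclideanSpace ℝ (Fin d) →L[ℝ] Y)
    (hGateaux : ∀ p u, Filter.Tendsto (fun t : ℝ => t⁻¹ • (H (p + t • u) - H p))
      (nhdsWithin 0 {(0 : ℝ)}ᶜ) (nhds (DH p u)))
    -- the sequence generated by the convex-concave procedure
    (x : ℕ → EuclideanSpace ℝ (Fin d)) (v : ℕ → EuclideanSpace ℝ (Fin d))
    (hx0 : x 0 ∈ A ∧ -(G (x 0) - H (x 0)) ∈ K)
    (hv : ∀ n, v n ∈ subdiff h₀ (x n))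
    (hsol : ∀ n, (x (n + 1) ∈ A ∧
        -(G (x (n + 1)) - H (x n) - DH (x n) (x (n + 1) - x n)) ∈ K) ∧
      ∀ y, y ∈ A → -(G y - H (x n) - DH (x n) (y - x n)) ∈ K →
        g₀ (x (n + 1)) - ⟪v n, x (n + 1) - x n⟫ ≤ g₀ y - ⟪v n, y - x n⟫) :
    (∀ n, {y | y ∈ A ∧ -(G y - H (x n) - DH (x n) (y - x n)) ∈ K}.Nonempty) ∧
    (∀ n, x n ∈ A ∧ -(G (x n) - H (x n)) ∈ K) ∧
    (∀ n, g₀ (x (n + 1)) - h₀ (x (n + 1)) ≤ g₀ (x n) - h₀ (x n)) ∧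
    ((∃ B : ℝ, ∀ y, y ∈ A → -(G y - H y) ∈ K → B ≤ g₀ y - h₀ y) →
      ∃ L : ℝ, Filter.Tendsto (fun n => g₀ (x n) - h₀ (x n)) Filter.atTop (nhds L)) :=
  stmt_13_general K hKclosed hKconvex hKcone g₀ h₀ G H hH A DH hGateaux x v hx0 hv hsol
end

section
/- Let Y be a real Banach space with K ⊆ Y a finite dimensional proper cone, G be continuous on A, H be continuously Fréchet differentiable on A, and suppose there exists c ≥ 0 such that the penalty function Φ_c(x) = f₀(x) + c·dist(F(x), −K) is coercive on A. Let t₀ ≻_{K*} 0. For z ∈ ℝ^d write F_z(x) = G(x) − H(z) − DH(z)(x − z) and let M_z(x) = F_z(x) + K for x ∈ A and M_z(x) = ∅ otherwise. Let 𝒟₀ be a nonempty set of points z ∈ A for which the feasible region {x ∈ A : F_z(x) ⪯_K 0} is nonempty, and suppose there exist a > 0, L_g > 0, L_h > 0 such that for every z ∈ 𝒟₀ and v ∈ ∂h₀(z): ‖v‖ ≤ L_h, and there exist r > 0 and a globally optimal solution x* of the non-penalized problem (minimize g₀(x) − ⟨v, x − z⟩ subject to F_z(x) ⪯_K 0, x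 ∈ A) such that g₀ is Lipschitz continuous near x* with constant L_g and dist(F_z(x), −K) ≥ a·dist(x, M_z^{-1}(0)) for all x ∈ B(x*, r) ∩ A. Then there exists μ* ≥ 0 such that for all μ ≥ μ*, all z ∈ 𝒟₀, and all v ∈ ∂h₀(z), the penalized problem — minimize over (x, s) the function g₀(x) − ⟨v, x − z⟩ + μ⟨t₀, s⟩ subject to F_z(x) ⪯_K s, s ⪰_K 0, x ∈ A — has a globally optimal solution, and a pair (x*, s*) is a globally optimal solution of this penalized problem if and only if s* = 0 and x* is a globally optimal solution of the corresponding non-penalized problem. -/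
open scoped RealInnerProductSpace Pointwise

/-!
Fix `z ∈ 𝒟₀`, `v ∈ ∂h₀(z)`, and write `f x = g₀ x - ⟪v, x - z⟫`, `Φ = F_z`, `S = M_z⁻¹(0)`.
Since `Φ` is `K`-convex, `x ↦ dist(Φ x, -K)` is convex, so `θ = f + β • dist(Φ ·, -K)` is convex
on `A`.
Near the constrained minimizer `x*`, `f` is Lipschitz with constant `Lg + Lh`, hence
`f x* ≤ f x + (Lg + Lh) dist(x, S)` (Clarke's exact penalization), and for `β = (Lg + Lh) / a` the
error bound turns this into `f x* ≤ θ x`: `x*` is a local, hence by convexity a global, minimizer of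
`θ` on `A`. As `K` is finite dimensional and `t₀` is strictly positive on `K`, there is `ε > 0` with
`t₀ s ≥ ε ‖s‖ ≥ ε dist(Φ x, -K)` whenever `Φ x ⪯_K s`, so every `μ > β / ε` makes the slack
penalty exact, and a positive optimal slack would contradict `f x* ≤ f x + (β / ε) t₀ s`.
-/

open Metric Set
open scoped NNReal Topology

section Cones

variable {E : Type*} [AddCommGroup E] [Module ℝ E]

def ConvexCone.ofConvex {s : Set E} (hs : Convex ℝ s)
    (hsmul : ∀ c : ℝ, 0 < c → ∀ y ∈ s, c • y ∈ s) : ConvexCone ℝ E where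
  carrier := s
  smul_mem' c hc y hy := hsmul c hc y hy
  add_mem' x hx y hy := by
    convert hsmul 2 two_pos _ (hs hx hy (by norm_num : (0 : ℝ) ≤ 1 / 2)
      (by norm_num : (0 : ℝ) ≤ 1 / 2) (by norm_num)) using 1
    module

theorem KConvex.sub_affine {X F : Type*} [AddCommGroup X] [Module ℝ X] [FunLike F X E]
    [LinearMapClass F ℝ X E] {K : Set E} {G : X → E} (hG : KConvex K G) (b : E) (T : F) (z : X) :
    KConvex K fun x => G x - b - T (x - z) := by
  intro x₁ x₂ α hα
  convert hG x₁ x₂ α hα using 1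
  simp only [map_sub, map_add, map_smul]
  module

end Cones

section Distance

variable {Y : Type*} [NormedAddCommGroup Y] [NormedSpace ℝ Y]

theorem ConvexCone.exists_mul_norm_le (C : ConvexCone ℝ Y) (hC : IsClosed (C : Set Y))
    (hfd : FiniteDimensional ℝ (Submodule.span ℝ (C : Set Y))) (t : Y →L[ℝ] ℝ)
    (ht : ∀ y ∈ C, y ≠ 0 → 0 < t y) : ∃ ε > 0, ∀ y ∈ C, ε * ‖y‖ ≤ t y := by
  set T := (C : Set Y) ∩ sphere 0 1
  have hT : IsCompact T := by
    have hsub : T ⊆ Subtype.val '' closedBall (0 : Submodule.span ℝ (C : Set Y)) 1 :=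
      fun y hy => ⟨⟨y, Submodule.subset_span hy.1⟩,
        by simpa using (mem_sphere_zero_iff_norm.1 hy.2).le, rfl⟩
    exact ((isCompact_closedBall _ _).image continuous_subtype_val).of_isClosed_subset
      (hC.inter isClosed_sphere) hsub
  obtain ⟨ε, hε, hεT⟩ : ∃ ε > 0, ∀ y ∈ T, ε ≤ t y := by
    rcases T.eq_empty_or_nonempty with hTe | hTne
    · exact ⟨1, one_pos, by simp [hTe]⟩
    · obtain ⟨u, hu, hmin⟩ := hT.exists_isMinOn hTne t.continuous.continuousOn
      exact ⟨t u, ht u hu.1 (ne_zero_of_mem_unit_sphere ⟨u, hu.2⟩), hmin⟩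
  refine ⟨ε, hε, fun y hy => ?_⟩
  rcases eq_or_ne y 0 with rfl | hy0
  · simp
  have hpos : 0 < ‖y‖ := norm_pos_iff.2 hy0
  have hyT : ‖y‖⁻¹ • y ∈ T :=
    ⟨C.smul_mem (inv_pos.2 hpos) hy, by simp [norm_smul, hpos.ne']⟩
  have := hεT _ hyT
  rw [map_smul, smul_eq_mul, le_inv_mul_iff₀ hpos] at this
  linarith

theorem ConvexCone.infDist_neg_le_infDist_neg (C : ConvexCone ℝ Y) {y y' : Y}
    (h : y' - y ∈ C) : infDist y (-(C : Set Y)) ≤ infDist y' (-(C : Set Y)) := by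
  rw [le_infDist ⟨-(y' - y), by simpa using h⟩]
  intro w hw
  have hw' : w - (y' - y) ∈ -(C : Set Y) := by
    simpa [neg_sub, sub_eq_add_neg, add_comm] using C.add_mem (Set.mem_neg.1 hw) h
  calc infDist y (-(C : Set Y)) ≤ dist y (w - (y' - y)) := infDist_le_dist_of_mem hw'
    _ = dist y' w := by rw [dist_eq_norm, dist_eq_norm]; congr 1; abel

theorem convexOn_infDist {T : Set Y} (hT : Convex ℝ T) :
    ConvexOn ℝ univ fun y => infDist y T := by
  refine ⟨convex_univ, fun y₁ _ y₂ _ p q hp hq hpq => ?_⟩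
  rcases T.eq_empty_or_nonempty with rfl | hne
  · simp
  refine le_of_forall_pos_le_add fun η hη => ?_
  obtain ⟨w₁, hw₁, hd₁⟩ := (infDist_lt_iff hne).1 (lt_add_of_pos_right (infDist y₁ T) hη)
  obtain ⟨w₂, hw₂, hd₂⟩ := (infDist_lt_iff hne).1 (lt_add_of_pos_right (infDist y₂ T) hη)
  calc infDist (p • y₁ + q • y₂) T ≤ dist (p • y₁ + q • y₂) (p • w₁ + q • w₂) :=
        infDist_le_dist_of_mem (hT hw₁ hw₂ hp hq hpq)
    _ ≤ p * dist y₁ w₁ + q * dist y₂ w₂ := by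
        refine (dist_add_add_le _ _ _ _).trans_eq ?_
        rw [dist_smul₀, dist_smul₀, Real.norm_of_nonneg hp, Real.norm_of_nonneg hq]
    _ ≤ p * (infDist y₁ T + η) + q * (infDist y₂ T + η) := by gcongr
    _ = p • infDist y₁ T + q • infDist y₂ T + η := by
        simp only [smul_eq_mul]; linear_combination η * hpq

theorem KConvex.convexOn_infDist_neg {X : Type*} [AddCommGroup X] [Module ℝ X]
    (C : ConvexCone ℝ Y) {Φ : X → Y} (hΦ : KConvex (C : Set Y) Φ) :
    ConvexOn ℝ univ fun x => infDist (Φ x) (-(C : Set Y)) := by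
  refine ⟨convex_univ, fun x₁ _ x₂ _ p q hp hq hpq => ?_⟩
  obtain rfl : q = 1 - p := by linarith
  calc infDist (Φ (p • x₁ + (1 - p) • x₂)) (-(C : Set Y))
      ≤ infDist (p • Φ x₁ + (1 - p) • Φ x₂) (-(C : Set Y)) :=
        C.infDist_neg_le_infDist_neg (hΦ x₁ x₂ p ⟨hp, by linarith⟩)
    _ ≤ _ := (convexOn_infDist C.convex.neg).2 (mem_univ _) (mem_univ _) hp hq hpq

end Distance

theorem IsMinOn.le_add_mul_infDist {E : Type*} [PseudoMetricSpace E] {f : E → ℝ}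
    {S : Set E} {x₀ : E} {L : ℝ≥0} {ρ : ℝ} (hmin : IsMinOn f S x₀) (hx₀ : x₀ ∈ S)
    (hf : LipschitzOnWith L f (ball x₀ ρ)) {x : E} (hx : dist x x₀ < ρ / 2) :
    f x₀ ≤ f x + L * infDist x S := by
  refine le_of_forall_pos_le_add fun ε hε => ?_
  have hη : 0 < ε / (L + 1) := by positivity
  obtain ⟨x', hx'S, hxx'⟩ := (infDist_lt_iff ⟨x₀, hx₀⟩).1
    (lt_min (lt_add_of_pos_right _ hη) ((infDist_le_dist_of_mem hx₀).trans_lt hx))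
  rw [lt_min_iff, dist_comm] at hxx'
  have hx'ball : x' ∈ ball x₀ ρ := by
    rw [mem_ball]; linarith [dist_triangle x' x x₀]
  have hxball : x ∈ ball x₀ ρ := by
    rw [mem_ball]; linarith [dist_nonneg (x := x) (y := x₀)]
  have hLη : (L : ℝ) * (ε / (L + 1)) ≤ ε := by
    rw [mul_div_assoc', div_le_iff₀ (by positivity)]; nlinarith
  calc f x₀ ≤ f x' := hmin hx'S
    _ ≤ f x + L * dist x' x := hf.le_add_mul hx'ball hxball
    _ ≤ f x + L * (infDist x S + ε / (L + 1)) := by gcongr; exact hxx'.1.le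
    _ ≤ f x + L * infDist x S + ε := by rw [mul_add]; linarith

theorem isMinOn_add_mul_of_errorBound {E : Type*} [NormedAddCommGroup E] [NormedSpace ℝ E]
    {A S : Set E} {f ψ : E → ℝ} {x₀ : E} {L : ℝ≥0} {ρ r a β : ℝ}
    (hf : ConvexOn ℝ A f) (hψ : ConvexOn ℝ A ψ) (hx₀A : x₀ ∈ A) (hx₀S : x₀ ∈ S)
    (hψx₀ : ψ x₀ = 0) (hmin : IsMinOn f S x₀) (hlip : LipschitzOnWith L f (ball x₀ ρ))
    (hρ : 0 < ρ) (hr : 0 < r) (herr : ∀ x ∈ closedBall x₀ r ∩ A, a * infDist x S ≤ ψ x)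
    (hβ : 0 ≤ β) (hL : L ≤ β * a) :
    IsMinOn (fun x => f x + β * ψ x) A x₀ := by
  refine IsMinOn.of_isLocalMinOn_of_convexOn hx₀A ?_ (hf.add (hψ.smul hβ))
  have hball : ball x₀ (min r (ρ / 2)) ∈ 𝓝 x₀ := ball_mem_nhds x₀ (by positivity)
  filter_upwards [self_mem_nhdsWithin, mem_nhdsWithin_of_mem_nhds hball] with x hxA hx
  rw [mem_ball, lt_min_iff] at hx
  calc f x₀ + β * ψ x₀ = f x₀ := by rw [hψx₀, mul_zero, add_zero]
    _ ≤ f x + L * infDist x S := hmin.le_add_mul_infDist hx₀S hlip hx.2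
    _ ≤ f x + β * (a * infDist x S) := by rw [← mul_assoc]; gcongr; exact infDist_nonneg
    _ ≤ f x + β * ψ x := by gcongr; exact herr x ⟨mem_closedBall.2 hx.1.le, hxA⟩

section InnerProductSpace

variable {E : Type*} [NormedAddCommGroup E] [InnerProductSpace ℝ E]

theorem ConvexOn.sub_inner {A : Set E} {g : E → ℝ} (hg : ConvexOn ℝ A g) (v z : E) :
    ConvexOn ℝ A fun x => g x - ⟪v, x - z⟫ :=
  (hg.sub (((innerₛₗ ℝ v).concaveOn hg.1).add_const (-⟪v, z⟫))).congr fun x _ => by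
    simp only [Pi.sub_apply, Pi.add_apply, innerₛₗ_apply_apply, inner_sub_right]
    ring

theorem LipschitzOnWith.sub_inner {s : Set E} {g : E → ℝ} {L : ℝ≥0}
    (hg : LipschitzOnWith L g s) (v z : E) :
    LipschitzOnWith (L + ‖v‖₊) (fun x => g x - ⟪v, x - z⟫) s :=
  hg.sub (LipschitzWith.of_dist_le_mul fun x y => by
    rw [Real.dist_eq, ← inner_sub_right, sub_sub_sub_cancel_right, dist_eq_norm, coe_nnnorm]
    exact abs_real_inner_le_norm v (x - y)).lipschitzOnWith

end InnerProductSpace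

section ConeProgram

variable {X Y : Type*} [AddCommGroup Y] [Module ℝ Y]

def IsConstrainedMin (C : ConvexCone ℝ Y) (A : Set X) (Φ : X → Y) (f : X → ℝ) (x : X) : Prop :=
  (x ∈ A ∧ -Φ x ∈ C) ∧ ∀ y, y ∈ A → -Φ y ∈ C → f x ≤ f y

def IsSlackPenalizedMin (C : ConvexCone ℝ Y) (A : Set X) (Φ : X → Y) (f : X → ℝ)
    (pen : Y → ℝ) (p : X × Y) : Prop :=
  (p.1 ∈ A ∧ p.2 ∈ C ∧ p.2 - Φ p.1 ∈ C) ∧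
    ∀ q : X × Y, q.1 ∈ A → q.2 ∈ C → q.2 - Φ q.1 ∈ C → f p.1 + pen p.2 ≤ f q.1 + pen q.2

theorem isSlackPenalizedMin_iff {F : Type*} [FunLike F Y ℝ] [LinearMapClass F ℝ Y ℝ]
    {C : ConvexCone ℝ Y} (h0 : (0 : Y) ∈ C) {A : Set X} {Φ : X → Y} {f : X → ℝ} {t : F}
    (ht : ∀ y ∈ C, y ≠ 0 → 0 < t y) {x₀ : X} (hx₀ : x₀ ∈ A ∧ -Φ x₀ ∈ C) {μ₀ μ : ℝ} (hμ : μ₀ < μ)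
    (hpen : ∀ x ∈ A, ∀ s ∈ C, s - Φ x ∈ C → f x₀ ≤ f x + μ₀ * t s) :
    (∃ p, IsSlackPenalizedMin C A Φ f (fun s => μ * t s) p) ∧
      ∀ x s, IsSlackPenalizedMin C A Φ f (fun s => μ * t s) (x, s) ↔
        s = 0 ∧ IsConstrainedMin C A Φ f x := by
  have ht₀ : ∀ y ∈ C, 0 ≤ t y := fun y hy => by
    rcases eq_or_ne y 0 with rfl | hy0
    · simp
    · exact (ht y hy hy0).le
  have hx₀min : IsSlackPenalizedMin C A Φ f (fun s => μ * t s) (x₀, 0) := by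
    refine ⟨⟨hx₀.1, h0, by simpa using hx₀.2⟩, fun q hq₁ hq₂ hq => ?_⟩
    calc f x₀ + μ * t 0 = f x₀ := by simp
      _ ≤ f q.1 + μ₀ * t q.2 := hpen q.1 hq₁ q.2 hq₂ hq
      _ ≤ f q.1 + μ * t q.2 := by gcongr; exact ht₀ q.2 hq₂
  refine ⟨⟨_, hx₀min⟩, fun x s => ⟨fun ⟨⟨hx, hs, hsx⟩, hopt⟩ => ?_, ?_⟩⟩
  · obtain rfl : s = 0 := by
      by_contra hs0
      have h₁ := hopt (x₀, 0) hx₀.1 h0 (by simpa using hx₀.2)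
      have h₂ := hpen x hx s hs hsx
      have h₃ := ht s hs hs0
      simp only [map_zero, mul_zero, add_zero] at h₁
      linarith [mul_lt_mul_of_pos_right hμ h₃]
    refine ⟨rfl, ⟨hx, by simpa using hsx⟩, fun y hy hyC => ?_⟩
    simpa using hopt (y, 0) hy h0 (by simpa using hyC)
  · rintro ⟨rfl, ⟨hx, hxC⟩, hopt⟩
    refine ⟨⟨hx, h0, by simpa using hxC⟩, fun q hq₁ hq₂ hq => ?_⟩
    calc f x + μ * t 0 = f x := by simp
      _ ≤ f x₀ := hopt x₀ hx₀.1 hx₀.2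
      _ ≤ f q.1 + μ * t q.2 := by simpa using hx₀min.2 q hq₁ hq₂ hq

end ConeProgram

theorem le_add_pen_of_errorBound {E Y : Type*} [NormedAddCommGroup E] [NormedSpace ℝ E]
    [NormedAddCommGroup Y] [NormedSpace ℝ Y] {C : ConvexCone ℝ Y} {A : Set E} {Φ : E → Y}
    {f : E → ℝ} {x₀ : E} {L : ℝ≥0} {ρ r a β : ℝ} (hΦ : KConvex (C : Set Y) Φ)
    (hA : Convex ℝ A) (hf : ConvexOn ℝ A f) (hx₀ : IsConstrainedMin C A Φ f x₀)
    (hlip : LipschitzOnWith L f (ball x₀ ρ)) (hρ : 0 < ρ) (hr : 0 < r)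
    (herr : ∀ x ∈ closedBall x₀ r ∩ A,
      a * infDist x {x' | x' ∈ A ∧ -Φ x' ∈ C} ≤ infDist (Φ x) (-(C : Set Y)))
    (hβ : 0 ≤ β) (hL : L ≤ β * a) {pen : Y → ℝ} (hpen : ∀ s ∈ C, β * ‖s‖ ≤ pen s) :
    ∀ x ∈ A, ∀ s ∈ C, s - Φ x ∈ C → f x₀ ≤ f x + pen s := by
  intro x hx s hs hsx
  have hψ := (hΦ.convexOn_infDist_neg C).subset (subset_univ A) hA
  have hx₀C := Set.mem_neg.2 hx₀.1.2
  have hmin := isMinOn_add_mul_of_errorBound hf hψ hx₀.1.1 hx₀.1 (infDist_zero_of_mem hx₀C)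
    (fun y hy => hx₀.2 y hy.1 hy.2) hlip hρ hr herr hβ hL
  have hdist : infDist (Φ x) (-(C : Set Y)) ≤ ‖s‖ := by
    have hmem : Φ x - s ∈ -(C : Set Y) := Set.mem_neg.2 (by rwa [neg_sub])
    simpa [dist_eq_norm] using infDist_le_dist_of_mem (x := Φ x) hmem
  calc f x₀ = f x₀ + β * infDist (Φ x₀) (-(C : Set Y)) := by
        rw [infDist_zero_of_mem hx₀C, mul_zero, add_zero]
    _ ≤ f x + β * infDist (Φ x) (-(C : Set Y)) := hmin hx
    _ ≤ f x + pen s := by gcongr; exact (mul_le_mul_of_nonneg_left hdist hβ).trans (hpen s hs)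

theorem stmt_17_general {d : ℕ} {Y : Type*}
    [NormedAddCommGroup Y] [NormedSpace ℝ Y]
    (K : Set Y) (hKclosed : IsClosed K) (hKconvex : Convex ℝ K)
    (hKcone : ∀ c : ℝ, 0 ≤ c → ∀ y ∈ K, c • y ∈ K)
    (hKpointed : K ∩ (-K) = {0})
    -- K is finite dimensional
    (hKfd : FiniteDimensional ℝ (Submodule.span ℝ K))
    (g₀ h₀ : EuclideanSpace ℝ (Fin d) → ℝ)
    (hg₀ : ConvexOn ℝ Set.univ g₀)
    (G H : EuclideanSpace ℝ (Fin d) → Y)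
    (hG : KConvex K G)
    (A : Set (EuclideanSpace ℝ (Fin d))) (hAconvex : Convex ℝ A)
    (DH : EuclideanSpace ℝ (Fin d) → EuclideanSpace ℝ (Fin d) →L[ℝ] Y)
    (c : ℝ)
    -- t₀ ≻_{K*} 0
    (t₀ : Y →L[ℝ] ℝ) (ht₀pos : ∀ y ∈ K, y ≠ 0 → 0 < t₀ y)
    (D₀ : Set (EuclideanSpace ℝ (Fin d)))
    (a Lg Lh : ℝ) (ha : 0 < a) (hLg : 0 < Lg) (hLh : 0 < Lh)
    (hmain : ∀ z ∈ D₀, ∀ v ∈ subdiff h₀ z, ‖v‖ ≤ Lh ∧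
      ∃ r > (0 : ℝ), ∃ xstar : EuclideanSpace ℝ (Fin d),
        -- xstar is a globally optimal solution of the non-penalized problem
        ((xstar ∈ A ∧ -(G xstar - H z - DH z (xstar - z)) ∈ K) ∧
          ∀ y, y ∈ A → -(G y - H z - DH z (y - z)) ∈ K →
            g₀ xstar - ⟪v, xstar - z⟫ ≤ g₀ y - ⟪v, y - z⟫) ∧
        -- g₀ is Lipschitz continuous near xstar with constant Lg
        (∃ ρ > (0 : ℝ), ∀ y₁ ∈ Metric.ball xstar ρ, ∀ y₂ ∈ Metric.ball xstar ρ,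
          |g₀ y₁ - g₀ y₂| ≤ Lg * ‖y₁ - y₂‖) ∧
        -- the uniform local error bound
        (∀ x ∈ Metric.closedBall xstar r ∩ A,
          a * Metric.infDist x {x' | x' ∈ A ∧ -(G x' - H z - DH z (x' - z)) ∈ K} ≤
            Metric.infDist (G x - H z - DH z (x - z)) (-K))) :
    ∃ μs : ℝ, 0 ≤ μs ∧ ∀ μ : ℝ, μs ≤ μ → ∀ z ∈ D₀, ∀ v ∈ subdiff h₀ z,
      -- the penalized problem has a globally optimal solution
      (∃ p : EuclideanSpace ℝ (Fin d) × Y,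
        (p.1 ∈ A ∧ p.2 ∈ K ∧ p.2 - (G p.1 - H z - DH z (p.1 - z)) ∈ K) ∧
        ∀ q : EuclideanSpace ℝ (Fin d) × Y,
          q.1 ∈ A → q.2 ∈ K → q.2 - (G q.1 - H z - DH z (q.1 - z)) ∈ K →
          g₀ p.1 - ⟪v, p.1 - z⟫ + μ * t₀ p.2 ≤ g₀ q.1 - ⟪v, q.1 - z⟫ + μ * t₀ q.2) ∧
      -- exactness: (xstar, sstar) solves the penalized problem iff sstar = 0 and
      -- xstar solves the non-penalized problem
      (∀ (xstar : EuclideanSpace ℝ (Fin d)) (sstar : Y),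
        (((xstar ∈ A ∧ sstar ∈ K ∧ sstar - (G xstar - H z - DH z (xstar - z)) ∈ K) ∧
          ∀ q : EuclideanSpace ℝ (Fin d) × Y,
            q.1 ∈ A → q.2 ∈ K → q.2 - (G q.1 - H z - DH z (q.1 - z)) ∈ K →
            g₀ xstar - ⟪v, xstar - z⟫ + μ * t₀ sstar ≤
              g₀ q.1 - ⟪v, q.1 - z⟫ + μ * t₀ q.2) ↔
        (sstar = 0 ∧ (xstar ∈ A ∧ -(G xstar - H z - DH z (xstar - z)) ∈ K) ∧
          ∀ y, y ∈ A → -(G y - H z - DH z (y - z)) ∈ K →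
            g₀ xstar - ⟪v, xstar - z⟫ ≤ g₀ y - ⟪v, y - z⟫))) := by
  have h0K : (0 : Y) ∈ K := (hKpointed.symm.subset rfl).1
  set C := ConvexCone.ofConvex hKconvex fun c hc => hKcone c hc.le
  obtain ⟨ε, hε, hεC⟩ := C.exists_mul_norm_le hKclosed hKfd t₀ ht₀pos
  set β := (Lg + Lh) / a
  refine ⟨β / ε + 1, by positivity, fun μ hμ z hz v hv => ?_⟩
  obtain ⟨hvLh, r, hr, x₀, hx₀, ⟨ρ, hρ, hlip⟩, herr⟩ := hmain z hz v hv
  have hflip : LipschitzOnWith (Lg.toNNReal + ‖v‖₊) (fun x => g₀ x - ⟪v, x - z⟫) (ball x₀ ρ) :=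
    (LipschitzOnWith.of_dist_le' fun y₁ h₁ y₂ h₂ => by
      simpa [Real.dist_eq, dist_eq_norm] using hlip y₁ h₁ y₂ h₂).sub_inner v z
  have hL : ((Lg.toNNReal + ‖v‖₊ : ℝ≥0) : ℝ) ≤ β * a := by
    rw [NNReal.coe_add, Real.coe_toNNReal _ hLg.le, coe_nnnorm, div_mul_cancel₀ _ ha.ne']
    linarith
  have hpen := le_add_pen_of_errorBound (C := C) (hG.sub_affine (H z) (DH z) z) hAconvex
    ((hg₀.subset (subset_univ A) hAconvex).sub_inner v z) hx₀ hflip hρ hr herr (by positivity) hL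
    (pen := fun s => β / ε * t₀ s) fun s hs => calc
      β * ‖s‖ = β / ε * (ε * ‖s‖) := by field_simp
      _ ≤ β / ε * t₀ s := by gcongr; exact hεC s hs
  exact isSlackPenalizedMin_iff (C := C) (Φ := fun x => G x - H z - DH z (x - z))
    (f := fun x => g₀ x - ⟪v, x - z⟫) (t := t₀) h0K ht₀pos hx₀.1 ((lt_add_one _).trans_le hμ) hpen

theorem stmt_17 {d : ℕ} {Y : Type*}
    [NormedAddCommGroup Y] [NormedSpace ℝ Y] [CompleteSpace Y]
    (K : Set Y) (hKclosed : IsClosed K) (hKconvex : Convex ℝ K)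
    (hKcone : ∀ c : ℝ, 0 ≤ c → ∀ y ∈ K, c • y ∈ K)
    (hKpointed : K ∩ (-K) = {0})
    -- K is finite dimensional
    (hKfd : FiniteDimensional ℝ (Submodule.span ℝ K))
    (g₀ h₀ : EuclideanSpace ℝ (Fin d) → ℝ)
    (hg₀ : ConvexOn ℝ Set.univ g₀) (hh₀ : ConvexOn ℝ Set.univ h₀)
    (G H : EuclideanSpace ℝ (Fin d) → Y)
    (hG : KConvex K G) (hH : KConvex K H)
    (A : Set (EuclideanSpace ℝ (Fin d))) (hAclosed : IsClosed A) (hAconvex : Convex ℝ A)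
    -- G is continuous on A, H is continuously Fréchet differentiable on A
    (hGcont : ContinuousOn G A)
    (DH : EuclideanSpace ℝ (Fin d) → EuclideanSpace ℝ (Fin d) →L[ℝ] Y)
    (hHdiff : ∀ p ∈ A, HasFDerivAt H (DH p) p)
    (hDHcont : ContinuousOn DH A)
    -- the penalty function Φ_c is coercive on A for some c ≥ 0
    (c : ℝ) (hc : 0 ≤ c)
    (hcoercive : ∀ xs : ℕ → EuclideanSpace ℝ (Fin d), (∀ n, xs n ∈ A) →
      Filter.Tendsto (fun n => ‖xs n‖) Filter.atTop Filter.atTop →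
      Filter.Tendsto
        (fun n => g₀ (xs n) - h₀ (xs n) + c * Metric.infDist (G (xs n) - H (xs n)) (-K))
        Filter.atTop Filter.atTop)
    -- t₀ ≻_{K*} 0
    (t₀ : Y →L[ℝ] ℝ) (ht₀ : ∀ y ∈ K, 0 ≤ t₀ y) (ht₀pos : ∀ y ∈ K, y ≠ 0 → 0 < t₀ y)
    -- 𝒟₀ is a nonempty set of points of A with nonempty linearized feasible region
    (D₀ : Set (EuclideanSpace ℝ (Fin d))) (hD₀ne : D₀.Nonempty)
    (hD₀ : ∀ z ∈ D₀, z ∈ A ∧ ∃ x ∈ A, -(G x - H z - DH z (x - z)) ∈ K)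
    (a Lg Lh : ℝ) (ha : 0 < a) (hLg : 0 < Lg) (hLh : 0 < Lh)
    (hmain : ∀ z ∈ D₀, ∀ v ∈ subdiff h₀ z, ‖v‖ ≤ Lh ∧
      ∃ r > (0 : ℝ), ∃ xstar : EuclideanSpace ℝ (Fin d),
        -- xstar is a globally optimal solution of the non-penalized problem
        ((xstar ∈ A ∧ -(G xstar - H z - DH z (xstar - z)) ∈ K) ∧
          ∀ y, y ∈ A → -(G y - H z - DH z (y - z)) ∈ K →
            g₀ xstar - ⟪v, xstar - z⟫ ≤ g₀ y - ⟪v, y - z⟫) ∧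
        -- g₀ is Lipschitz continuous near xstar with constant Lg
        (∃ ρ > (0 : ℝ), ∀ y₁ ∈ Metric.ball xstar ρ, ∀ y₂ ∈ Metric.ball xstar ρ,
          |g₀ y₁ - g₀ y₂| ≤ Lg * ‖y₁ - y₂‖) ∧
        -- the uniform local error bound
        (∀ x ∈ Metric.closedBall xstar r ∩ A,
          a * Metric.infDist x {x' | x' ∈ A ∧ -(G x' - H z - DH z (x' - z)) ∈ K} ≤
            Metric.infDist (G x - H z - DH z (x - z)) (-K))) :
    ∃ μs : ℝ, 0 ≤ μs ∧ ∀ μ : ℝ, μs ≤ μ → ∀ z ∈ D₀, ∀ v ∈ subdiff h₀ z,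
      -- the penalized problem has a globally optimal solution
      (∃ p : EuclideanSpace ℝ (Fin d) × Y,
        (p.1 ∈ A ∧ p.2 ∈ K ∧ p.2 - (G p.1 - H z - DH z (p.1 - z)) ∈ K) ∧
        ∀ q : EuclideanSpace ℝ (Fin d) × Y,
          q.1 ∈ A → q.2 ∈ K → q.2 - (G q.1 - H z - DH z (q.1 - z)) ∈ K →
          g₀ p.1 - ⟪v, p.1 - z⟫ + μ * t₀ p.2 ≤ g₀ q.1 - ⟪v, q.1 - z⟫ + μ * t₀ q.2) ∧
      -- exactness: (xstar, sstar) solves the penalized problem iff sstar = 0 and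
      -- xstar solves the non-penalized problem
      (∀ (xstar : EuclideanSpace ℝ (Fin d)) (sstar : Y),
        (((xstar ∈ A ∧ sstar ∈ K ∧ sstar - (G xstar - H z - DH z (xstar - z)) ∈ K) ∧
          ∀ q : EuclideanSpace ℝ (Fin d) × Y,
            q.1 ∈ A → q.2 ∈ K → q.2 - (G q.1 - H z - DH z (q.1 - z)) ∈ K →
            g₀ xstar - ⟪v, xstar - z⟫ + μ * t₀ sstar ≤
              g₀ q.1 - ⟪v, q.1 - z⟫ + μ * t₀ q.2) ↔
        (sstar = 0 ∧ (xstar ∈ A ∧ -(G xstar - H z - DH z (xstar - z)) ∈ K) ∧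
          ∀ y, y ∈ A → -(G y - H z - DH z (y - z)) ∈ K →
            g₀ xstar - ⟪v, xstar - z⟫ ≤ g₀ y - ⟪v, y - z⟫))) :=
  stmt_17_general K hKclosed hKconvex hKcone hKpointed hKfd g₀ h₀ hg₀ G H hG A hAconvex DH c t₀
    ht₀pos D₀ a Lg Lh ha hLg hLh hmain
end
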